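/- arXiv:math/0612747 — 5 statements merged into one kernel-verified Lean document; each statement's English description precedes it below -/
import Mathlib

section
/- For each integer n ≥ 0, Σ_{j=1}^∞ j √(ℓ(2^j)) 2^{−3j/2} (1 + 2^{−j})^{−n} ≤ log₂(e) · ∫_0^1 √(t ℓ(2/t)) log(2/t) (1 + t/2)^{−n} dt, where ℓ is positive and nondecreasing. -/
open Filter Topology MeasureTheory Set

private lemma sqrt_two_rpow (x : ℝ) : Real.sqrt ((2:ℝ)^x) = (2:ℝ)^(x/2) := by
  rw [Real.sqrt_eq_rpow, ← Real.rpow_mul (by norm_num : (0:ℝ) ≤ 2)]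
  ring_nf

private lemma rpow_add2 {x y z : ℝ} (h : x + y = z) :
    (2:ℝ)^x * (2:ℝ)^y = (2:ℝ)^z := by
  rw [← Real.rpow_add two_pos, h]

private lemma natpow_eq_rpow (j : ℕ) : ((2:ℝ)^(j+1:ℕ) : ℝ) = (2:ℝ)^((j:ℝ)+1) := by
  rw [← Real.rpow_natCast 2 (j+1)]; push_cast; ring_nf

private lemma natpow_eq_rpow2 (j : ℕ) : ((2:ℝ)^(j+2:ℕ) : ℝ) = (2:ℝ)^((j:ℝ)+2) := by
  rw [← Real.rpow_natCast 2 (j+2)]; push_cast; ring_nf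

private lemma two_rpow_pos (x : ℝ) : (0:ℝ) < (2:ℝ)^x := Real.rpow_pos_of_pos two_pos x

private lemma two_rpow_le_one {x : ℝ} (hx : x ≤ 0) : (2:ℝ)^x ≤ 1 :=
  Real.rpow_le_one_of_one_le_of_nonpos one_le_two hx

/-- For each n ≥ 0,
Σ_{j=1}^∞ j √(ℓ(2^j)) 2^{-3j/2} (1+2^{-j})^{-n}
  ≤ log₂(e) ∫_0^1 √(t ℓ(2/t)) log(2/t) (1+t/2)^{-n} dt,
for ℓ positive and nondecreasing on (0,∞). -/
theorem stmt3
    (ℓ : ℝ → ℝ) (hpos : ∀ x : ℝ, 0 < x → 0 < ℓ x)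
    (hmono : ∀ x y : ℝ, 0 < x → x ≤ y → ℓ x ≤ ℓ y)
    (n : ℕ) :
    (∑' j : ℕ, ((j : ℝ) + 1) * Real.sqrt (ℓ (2 ^ (j + 1)))
        * (2 : ℝ) ^ (-(3 : ℝ) * (j + 1) / 2) / (1 + (2 : ℝ) ^ (-((j : ℝ) + 1))) ^ n)
      ≤ Real.logb 2 (Real.exp 1) *
        ∫ t in Set.Ioo (0 : ℝ) 1,
          Real.sqrt (t * ℓ (2 / t)) * Real.log (2 / t) / (1 + t / 2) ^ n := by
  classical
  have hlog2 : (0:ℝ) < Real.log 2 := Real.log_pos one_lt_two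
  have hlogb : Real.logb 2 (Real.exp 1) = 1 / Real.log 2 := by
    rw [Real.logb, Real.log_exp]
  set a : ℕ → ℝ := fun j => ((j : ℝ) + 1) * Real.sqrt (ℓ (2 ^ (j + 1)))
      * (2 : ℝ) ^ (-(3 : ℝ) * ((j : ℝ) + 1) / 2) / (1 + (2 : ℝ) ^ (-((j : ℝ) + 1))) ^ n
      with ha
  have hInonneg : 0 ≤ ∫ t in Set.Ioo (0:ℝ) 1,
      Real.sqrt (t * ℓ (2 / t)) * Real.log (2 / t) / (1 + t / 2) ^ n := by
    apply setIntegral_nonneg measurableSet_Ioo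
    intro t ht
    have h1 : (1:ℝ) ≤ 2 / t := by
      rw [le_div_iff₀ ht.1]; nlinarith [ht.2]
    have h2 := Real.log_nonneg h1
    have h3 : (0:ℝ) < (1 + t/2)^n := pow_pos (by linarith [ht.1]) n
    exact div_nonneg (mul_nonneg (Real.sqrt_nonneg _) h2) h3.le
  by_cases hsum : Summable a
  swap
  · rw [tsum_eq_zero_of_not_summable hsum]
    exact mul_nonneg (Real.logb_nonneg one_lt_two (Real.one_le_exp (by norm_num))) hInonneg
  -- the monotone extension and the measurable integrand
  set L : ℝ → ℝ := fun x => ℓ (max x 1) with hLdef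
  have hLmono : Monotone L := fun x y hxy =>
    hmono _ _ (lt_max_of_lt_right zero_lt_one) (max_le_max hxy le_rfl)
  have hLmeas : Measurable L := hLmono.measurable
  set f : ℝ → ℝ := fun t => Real.sqrt (t * L (2 / t)) * Real.log (2 / t) / (1 + t / 2) ^ n
      with hfdef
  have hdiv : Measurable fun t : ℝ => 2 / t := measurable_const.div measurable_id
  have hfmeas : Measurable f :=
    (((measurable_id.mul (hLmeas.comp hdiv)).sqrt).mul (Real.measurable_log.comp hdiv)).div
      ((measurable_const.add (measurable_id.div_const 2)).pow_const n)
  have hIeq : (∫ t in Set.Ioo (0:ℝ) 1,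
        Real.sqrt (t * ℓ (2 / t)) * Real.log (2 / t) / (1 + t / 2) ^ n)
      = ∫ t in Set.Ioo (0:ℝ) 1, f t := by
    apply setIntegral_congr_fun measurableSet_Ioo
    intro t ht
    have h1 : (1:ℝ) ≤ 2 / t := by
      rw [le_div_iff₀ ht.1]; nlinarith [ht.2]
    simp only [hfdef, hLdef, max_eq_left h1]
  -- dyadic intervals
  set S : ℕ → Set ℝ := fun j => Set.Ioc ((2:ℝ) ^ (-(j:ℝ) - 1)) ((2:ℝ) ^ (-(j:ℝ))) with hSdef
  have hSmeas : ∀ j, MeasurableSet (S j) := fun j => measurableSet_Ioc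
  have hSdisj : Pairwise (Function.onFun Disjoint S) := by
    have key : ∀ i j : ℕ, i < j → Disjoint (S i) (S j) := by
      intro i j hij
      apply Set.disjoint_left.2
      intro x hxi hxj
      have h1 : (2:ℝ) ^ (-(i:ℝ) - 1) < x := hxi.1
      have h2 : x ≤ (2:ℝ) ^ (-(j:ℝ)) := hxj.2
      have h3 : (2:ℝ) ^ (-(j:ℝ)) ≤ (2:ℝ) ^ (-(i:ℝ) - 1) := by
        apply (Real.rpow_le_rpow_left_iff one_lt_two).2
        have : (i:ℝ) + 1 ≤ (j:ℝ) := by exact_mod_cast hij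
        linarith
      linarith
    intro i j hij
    rcases hij.lt_or_gt with h | h
    · exact key i j h
    · exact (key j i h).symm
  have hSunion : (⋃ j, S j) = Set.Ioc (0:ℝ) 1 := by
    ext t
    simp only [hSdef, Set.mem_iUnion, Set.mem_Ioc]
    constructor
    · rintro ⟨j, h1, h2⟩
      refine ⟨lt_trans (two_rpow_pos _) h1, h2.trans ?_⟩
      exact two_rpow_le_one (by simp)
    · rintro ⟨ht0, ht1⟩
      have hex : ∃ j : ℕ, (2:ℝ) ^ (-(j:ℝ) - 1) < t := by
        obtain ⟨m, hm⟩ := pow_unbounded_of_one_lt (1/t) one_lt_two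
        have hmpos : (0:ℝ) < 2 ^ m := pow_pos two_pos m
        have h1' : 1 < 2 ^ m * t := by
          rw [div_lt_iff₀ ht0] at hm; linarith
        have hinv : ((2:ℝ) ^ m)⁻¹ < t := by
          by_contra hcon
          push_neg at hcon
          have := mul_le_mul_of_nonneg_left hcon hmpos.le
          rw [mul_inv_cancel₀ hmpos.ne'] at this
          linarith
        refine ⟨m, ?_⟩
        have heq : (2:ℝ) ^ (-(m:ℝ)) = ((2:ℝ) ^ m)⁻¹ := by
          rw [Real.rpow_neg (by norm_num), Real.rpow_natCast]
        have hle : (2:ℝ) ^ (-(m:ℝ) - 1) ≤ (2:ℝ) ^ (-(m:ℝ)) :=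
          (Real.rpow_le_rpow_left_iff one_lt_two).2 (by linarith)
        calc (2:ℝ) ^ (-(m:ℝ) - 1) ≤ (2:ℝ) ^ (-(m:ℝ)) := hle
          _ = ((2:ℝ) ^ m)⁻¹ := heq
          _ < t := hinv
      set m := Nat.find hex with hmdef
      refine ⟨m, Nat.find_spec hex, ?_⟩
      rcases Nat.eq_zero_or_pos m with h0 | hpos'
      · rw [h0]; simpa using ht1
      · obtain ⟨s, hs⟩ : ∃ s, m = s + 1 := ⟨m - 1, (Nat.succ_pred_eq_of_pos hpos').symm⟩
        have hmin := Nat.find_min hex (show m - 1 < m by omega)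
        push_neg at hmin
        have hcast : -((m:ℕ):ℝ) = -(((m-1:ℕ)):ℝ) - 1 := by
          rw [hs]; push_cast [hs]; ring
        rw [hcast]; exact hmin
  
  -- volume of the dyadic intervals
  have hvol : ∀ j : ℕ, (volume (S j)).toReal = (2:ℝ) ^ (-(j:ℝ) - 1) := by
    intro j
    have hdouble : (2:ℝ) ^ (-(j:ℝ)) = 2 * (2:ℝ) ^ (-(j:ℝ) - 1) := by
      rw [show (2:ℝ) * (2:ℝ)^(-(j:ℝ)-1) = (2:ℝ)^(1:ℝ) * (2:ℝ)^(-(j:ℝ)-1) by rw [Real.rpow_one],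
        rpow_add2 (by ring : (1:ℝ) + (-(j:ℝ)-1) = -(j:ℝ))]
    simp only [hSdef]
    rw [Real.volume_Ioc, ENNReal.toReal_ofReal (by linarith [two_rpow_pos (-(j:ℝ)-1)])]
    linarith
  -- pointwise facts on S j
  have hfacts : ∀ j : ℕ, ∀ t ∈ S j, 0 < t ∧ t ≤ 1 ∧ (1:ℝ) ≤ 2/t ∧
      (2:ℝ)^((j:ℝ)+1) ≤ 2/t ∧ 2/t ≤ (2:ℝ)^((j:ℝ)+2) ∧ t/2 ≤ (2:ℝ)^(-((j:ℝ)+1)) ∧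
      (2:ℝ)^(-(j:ℝ)-1) < t ∧ t ≤ (2:ℝ)^(-(j:ℝ)) := by
    intro j t ht
    simp only [hSdef, Set.mem_Ioc] at ht
    obtain ⟨h1, h2⟩ := ht
    have ht0 : 0 < t := lt_trans (two_rpow_pos _) h1
    have hup : t ≤ 1 := h2.trans (two_rpow_le_one (by simp))
    have h3 : (2:ℝ)^((j:ℝ)+1) ≤ 2/t := by
      rw [le_div_iff₀ ht0]
      calc (2:ℝ)^((j:ℝ)+1) * t ≤ (2:ℝ)^((j:ℝ)+1) * (2:ℝ)^(-(j:ℝ)) :=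
            mul_le_mul_of_nonneg_left h2 (two_rpow_pos _).le
        _ = 2 := by rw [rpow_add2 (by ring : ((j:ℝ)+1) + (-(j:ℝ)) = 1), Real.rpow_one]
    have h4 : 2/t ≤ (2:ℝ)^((j:ℝ)+2) := by
      rw [div_le_iff₀ ht0]
      calc (2:ℝ) = (2:ℝ)^((j:ℝ)+2) * (2:ℝ)^(-(j:ℝ)-1) := by
            rw [rpow_add2 (by ring : ((j:ℝ)+2) + (-(j:ℝ)-1) = 1), Real.rpow_one]
        _ ≤ (2:ℝ)^((j:ℝ)+2) * t := mul_le_mul_of_nonneg_left h1.le (two_rpow_pos _).le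
    have h5 : (1:ℝ) ≤ 2/t := by
      refine le_trans ?_ h3
      calc (1:ℝ) = (2:ℝ)^(0:ℝ) := (Real.rpow_zero 2).symm
        _ ≤ (2:ℝ)^((j:ℝ)+1) := (Real.rpow_le_rpow_left_iff one_lt_two).2 (by positivity)
    have h6 : t/2 ≤ (2:ℝ)^(-((j:ℝ)+1)) := by
      have he : (2:ℝ)^(-((j:ℝ)+1)) = (2:ℝ)^(-(j:ℝ)-1) := by rw [show -((j:ℝ)+1) = -(j:ℝ)-1 by ring]
      have hdouble : (2:ℝ) ^ (-(j:ℝ)) = 2 * (2:ℝ) ^ (-(j:ℝ) - 1) := by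
        rw [show (2:ℝ) * (2:ℝ)^(-(j:ℝ)-1) = (2:ℝ)^(1:ℝ) * (2:ℝ)^(-(j:ℝ)-1) by rw [Real.rpow_one],
          rpow_add2 (by ring : (1:ℝ) + (-(j:ℝ)-1) = -(j:ℝ))]
      rw [he]
      linarith
    exact ⟨ht0, hup, h5, h3, h4, h6, h1, h2⟩
  -- upper bound on S j
  set M : ℕ → ℝ := fun j =>
      (2:ℝ)^(-(j:ℝ)/2) * Real.sqrt (ℓ (2^(j+2))) * (((j:ℝ)+2) * Real.log 2) with hMdef
  have hupper : ∀ j : ℕ, ∀ t ∈ S j, 0 ≤ f t ∧ f t ≤ M j := by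
    intro j t ht
    obtain ⟨ht0, ht1, h5, h3, h4, h6, h1, h2⟩ := hfacts j t ht
    have hlog0 : 0 ≤ Real.log (2/t) := Real.log_nonneg h5
    have hden1 : (1:ℝ) ≤ (1 + t/2)^n := one_le_pow₀ (by linarith)
    have hLeq : L (2/t) = ℓ (2/t) := by simp only [hLdef]; rw [max_eq_left h5]
    have hf0 : 0 ≤ f t :=
      div_nonneg (mul_nonneg (Real.sqrt_nonneg _) hlog0) (le_trans zero_le_one hden1)
    refine ⟨hf0, ?_⟩
    have hA : f t ≤ Real.sqrt (t * L (2/t)) * Real.log (2/t) :=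
      div_le_self (mul_nonneg (Real.sqrt_nonneg _) hlog0) hden1
    have hs1 : Real.sqrt (t * L (2/t)) ≤ (2:ℝ)^(-(j:ℝ)/2) * Real.sqrt (ℓ (2^(j+2))) := by
      rw [Real.sqrt_mul ht0.le]
      apply mul_le_mul ?_ ?_ (Real.sqrt_nonneg _) (two_rpow_pos _).le
      · rw [← sqrt_two_rpow]
        exact Real.sqrt_le_sqrt h2
      · rw [hLeq]
        apply Real.sqrt_le_sqrt
        apply hmono _ _ (by positivity)
        rw [natpow_eq_rpow2]; exact h4
    have hs2 : Real.log (2/t) ≤ ((j:ℝ)+2) * Real.log 2 := by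
      calc Real.log (2/t) ≤ Real.log ((2:ℝ)^((j:ℝ)+2)) := Real.log_le_log (by positivity) h4
        _ = ((j:ℝ)+2) * Real.log 2 := Real.log_rpow two_pos _
    calc f t ≤ Real.sqrt (t * L (2/t)) * Real.log (2/t) := hA
      _ ≤ ((2:ℝ)^(-(j:ℝ)/2) * Real.sqrt (ℓ (2^(j+2)))) * (((j:ℝ)+2) * Real.log 2) :=
          mul_le_mul hs1 hs2 hlog0
            (mul_nonneg (two_rpow_pos _).le (Real.sqrt_nonneg _))
      _ = M j := by simp only [hMdef]
  -- lower bound on S j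
  set c : ℕ → ℝ := fun j => (2:ℝ)^((-(j:ℝ)-1)/2) * Real.sqrt (ℓ (2^(j+1)))
      * (((j:ℝ)+1) * Real.log 2) / (1 + (2:ℝ)^(-((j:ℝ)+1)))^n with hcdef
  have hlower : ∀ j : ℕ, ∀ t ∈ S j, c j ≤ f t := by
    intro j t ht
    obtain ⟨ht0, ht1, h5, h3, h4, h6, h1, h2⟩ := hfacts j t ht
    have hlog0 : 0 ≤ Real.log (2/t) := Real.log_nonneg h5
    have hLeq : L (2/t) = ℓ (2/t) := by simp only [hLdef]; rw [max_eq_left h5]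
    have hnum : (2:ℝ)^((-(j:ℝ)-1)/2) * Real.sqrt (ℓ (2^(j+1))) * (((j:ℝ)+1) * Real.log 2)
        ≤ Real.sqrt (t * L (2/t)) * Real.log (2/t) := by
      apply mul_le_mul ?_ ?_ (mul_nonneg (by positivity) hlog2.le) (Real.sqrt_nonneg _)
      · rw [Real.sqrt_mul ht0.le, ← sqrt_two_rpow]
        apply mul_le_mul (Real.sqrt_le_sqrt h1.le) ?_ (Real.sqrt_nonneg _) (Real.sqrt_nonneg _)
        rw [hLeq]
        apply Real.sqrt_le_sqrt
        apply hmono _ _ (by positivity)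
        rw [natpow_eq_rpow]; exact h3
      · calc ((j:ℝ)+1) * Real.log 2 = Real.log ((2:ℝ)^((j:ℝ)+1)) := (Real.log_rpow two_pos _).symm
          _ ≤ Real.log (2/t) := Real.log_le_log (two_rpow_pos _) h3
    have hden : (1 + t/2)^n ≤ (1 + (2:ℝ)^(-((j:ℝ)+1)))^n :=
      pow_le_pow_left₀ (by linarith) (by linarith) n
    have hdpos : (0:ℝ) < (1 + t/2)^n := pow_pos (by linarith) n
    simp only [hcdef, hfdef]
    exact div_le_div₀ (mul_nonneg (Real.sqrt_nonneg _) hlog0) hnum hdpos hden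
  -- per-interval integrability
  have hintj : ∀ j : ℕ, IntegrableOn f (S j) volume := by
    intro j
    apply Measure.integrableOn_of_bounded (M := M j) ?_ hfmeas.aestronglyMeasurable
    · rw [ae_restrict_iff' (hSmeas j)]
      refine ae_of_all _ fun t ht => ?_
      obtain ⟨h0, hM⟩ := hupper j t ht
      rwa [Real.norm_eq_abs, abs_of_nonneg h0]
    · simp only [hSdef]; exact measure_Ioc_lt_top.ne
  -- norm integral bound
  have hnormint : ∀ j : ℕ, (∫ t in S j, ‖f t‖) ≤ M j * (2:ℝ)^(-(j:ℝ)-1) := by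
    intro j
    have hbd : ∀ x ∈ S j, ‖(‖f x‖)‖ ≤ M j := by
      intro x hx
      obtain ⟨h0, hM⟩ := hupper j x hx
      rwa [norm_norm, Real.norm_eq_abs, abs_of_nonneg h0]
    have h1 : ‖∫ t in S j, ‖f t‖‖ ≤ M j * (volume (S j)).toReal := by
      apply norm_setIntegral_le_of_norm_le_const ?_ hbd
      simp only [hSdef]; exact measure_Ioc_lt_top
    rw [hvol j] at h1
    rw [Real.norm_eq_abs] at h1
    exact (le_abs_self _).trans h1
  -- comparison with a shifted copy of the summable sequence
  have hcompare : ∀ j : ℕ, M j * (2:ℝ)^(-(j:ℝ)-1) ≤ 4 * 2^n * Real.log 2 * a (j+1) := by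
    intro j
    have haj : a (j+1) = (((j:ℝ)+2) * Real.sqrt (ℓ (2^(j+2)))
        * (2:ℝ)^(-(3:ℝ)*((j:ℝ)+2)/2)) / (1 + (2:ℝ)^(-((j:ℝ)+2)))^n := by
      have e1 : ((j+1:ℕ):ℝ) + 1 = (j:ℝ) + 2 := by push_cast; ring
      have e2 : j+1+1 = j+2 := by ring
      simp only [ha, e1, e2]
    have hX0 : 0 ≤ ((j:ℝ)+2) * Real.sqrt (ℓ (2^(j+2))) * (2:ℝ)^(-(3:ℝ)*((j:ℝ)+2)/2) := by
      have := Real.sqrt_nonneg (ℓ (2^(j+2)))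
      have := (two_rpow_pos (-(3:ℝ)*((j:ℝ)+2)/2)).le
      positivity
    have hjnn : (0:ℝ) ≤ (j:ℝ) := Nat.cast_nonneg j
    have hDle : (1 + (2:ℝ)^(-((j:ℝ)+2)))^n ≤ 2^n := by
      apply pow_le_pow_left₀ (by positivity)
      have := two_rpow_le_one (show -((j:ℝ)+2) ≤ 0 by linarith)
      linarith
    have hDpos : (0:ℝ) < (1 + (2:ℝ)^(-((j:ℝ)+2)))^n :=
      pow_pos (by positivity) n
    have hXle : ((j:ℝ)+2) * Real.sqrt (ℓ (2^(j+2))) * (2:ℝ)^(-(3:ℝ)*((j:ℝ)+2)/2)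
        ≤ 2^n * (((j:ℝ)+2) * Real.sqrt (ℓ (2^(j+2)))
          * (2:ℝ)^(-(3:ℝ)*((j:ℝ)+2)/2) / (1 + (2:ℝ)^(-((j:ℝ)+2)))^n) := by
      rw [← mul_div_assoc, le_div_iff₀ hDpos]
      nlinarith [mul_le_mul_of_nonneg_left hDle hX0]
    have hid : (2:ℝ)^(-(j:ℝ)/2) * (2:ℝ)^(-(j:ℝ)-1) = 4 * (2:ℝ)^(-(3:ℝ)*((j:ℝ)+2)/2) := by
      rw [rpow_add2 (show (-(j:ℝ)/2) + (-(j:ℝ)-1) = ((1:ℝ)+1) + (-(3:ℝ)*((j:ℝ)+2)/2) by ring),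
        Real.rpow_add two_pos, Real.rpow_add two_pos, Real.rpow_one]
      ring
    calc M j * (2:ℝ)^(-(j:ℝ)-1)
        = ((2:ℝ)^(-(j:ℝ)/2) * (2:ℝ)^(-(j:ℝ)-1))
          * (Real.sqrt (ℓ (2^(j+2))) * (((j:ℝ)+2) * Real.log 2)) := by
          simp only [hMdef]; ring
      _ = 4 * Real.log 2 * (((j:ℝ)+2) * Real.sqrt (ℓ (2^(j+2)))
          * (2:ℝ)^(-(3:ℝ)*((j:ℝ)+2)/2)) := by rw [hid]; ring
      _ ≤ 4 * Real.log 2 * (2^n * (((j:ℝ)+2) * Real.sqrt (ℓ (2^(j+2)))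
          * (2:ℝ)^(-(3:ℝ)*((j:ℝ)+2)/2) / (1 + (2:ℝ)^(-((j:ℝ)+2)))^n)) :=
          mul_le_mul_of_nonneg_left hXle (mul_nonneg (by norm_num) hlog2.le)
      _ = 4 * 2^n * Real.log 2 * a (j+1) := by rw [haj]; ring
  -- summability of the norm integrals, integrability on the union
  have hbsum : Summable (fun j => 4 * 2^n * Real.log 2 * a (j+1)) :=
    ((summable_nat_add_iff 1).2 hsum).mul_left _
  have hnormsum : Summable (fun j => ∫ t in S j, ‖f t‖) :=
    Summable.of_nonneg_of_le (fun j => integral_nonneg fun t => norm_nonneg _)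
      (fun j => (hnormint j).trans (hcompare j)) hbsum
  have hIntU : IntegrableOn f (⋃ j, S j) volume :=
    integrableOn_iUnion_of_summable_integral_norm hintj hnormsum
  have hHasSum : HasSum (fun j => ∫ t in S j, f t) (∫ t in ⋃ j, S j, f t) :=
    hasSum_integral_iUnion hSmeas hSdisj hIntU
  -- the key per-interval estimate
  have hkey1 : ∀ j : ℕ, Real.log 2 * a j ≤ ∫ t in S j, f t := by
    intro j
    have h := setIntegral_ge_of_const_le (μ := volume) (hSmeas j)
      (by simp only [hSdef]; exact measure_Ioc_lt_top.ne) (hlower j) (hintj j)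
    rw [show volume.real (S j) = _ from hvol j, smul_eq_mul] at h
    refine le_trans (le_of_eq ?_) h
    simp only [ha, hcdef]
    rw [← rpow_add2 (show ((-(j:ℝ)-1)/2) + (-(j:ℝ)-1) = -(3:ℝ)*((j:ℝ)+1)/2 by ring)]
    ring
  -- put everything together
  have hfinal : Real.log 2 * ∑' j, a j ≤ ∫ t in Set.Ioo (0:ℝ) 1, f t := by
    have h1 : (∑' j, Real.log 2 * a j) ≤ ∑' j, ∫ t in S j, f t :=
      Summable.tsum_le_tsum hkey1 (hsum.mul_left _) hHasSum.summable
    have h2 : (∑' j, ∫ t in S j, f t) = ∫ t in Set.Ioo (0:ℝ) 1, f t := by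
      rw [hHasSum.tsum_eq, hSunion, integral_Ioc_eq_integral_Ioo]
    calc Real.log 2 * ∑' j, a j = ∑' j, Real.log 2 * a j := tsum_mul_left.symm
      _ ≤ ∑' j, ∫ t in S j, f t := h1
      _ = _ := h2
  rw [hlogb, hIeq, div_mul_eq_mul_div, one_mul, le_div_iff₀ hlog2, mul_comm]
  exact hfinal
end

section
/- Let ℓ be a positive, nondecreasing, slowly varying function. Then as n → ∞, n^{−3/2} ∫_0^n √(t ℓ(2n/t)) log(2n/t) (1 + t/(2n))^{−n} dt is asymptotically equivalent to (√(ℓ(n)) log(n) / n^{3/2}) · ∫_0^∞ √t e^{−t/2} dt. -/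
open Filter Topology

open MeasureTheory Set

set_option maxHeartbeats 1000000

-- auxiliary: dyadic bracketing for reals ≥ 1
lemma aux_dyadic (lam : ℝ) (h : 1 ≤ lam) :
    ∃ k : ℕ, (2:ℝ)^k ≤ lam ∧ lam < 2^(k+1) := by
  set m := ⌊lam⌋₊ with hm
  have hm1 : 1 ≤ m := (Nat.one_le_floor_iff _).mpr h
  refine ⟨Nat.log 2 m, ?_, ?_⟩
  · calc ((2:ℝ)^Nat.log 2 m) = ((2^Nat.log 2 m : ℕ) : ℝ) := by push_cast; ring
      _ ≤ (m:ℝ) := by exact_mod_cast Nat.pow_log_le_self 2 (by omega)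
      _ ≤ lam := Nat.floor_le (by linarith)
  · have h1 : m < 2 ^ (Nat.log 2 m + 1) := Nat.lt_pow_succ_log_self (by norm_num) m
    have h2 : lam < (m:ℝ) + 1 := Nat.lt_floor_add_one lam
    have : (m:ℝ) + 1 ≤ (2:ℝ)^(Nat.log 2 m + 1) := by exact_mod_cast Nat.succ_le_of_lt h1
    linarith

lemma aux_sqrt_pow (x : ℝ) (hx : 0 ≤ x) (k : ℕ) :
    Real.sqrt (x ^ k) = (Real.sqrt x) ^ k := by
  induction k with
  | zero => simp
  | succ k ih => rw [pow_succ, pow_succ, Real.sqrt_mul (by positivity), ih]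

lemma aux_potter (ℓ : ℝ → ℝ) (hpos : ∀ x : ℝ, 0 < x → 0 < ℓ x)
    (hmono : ∀ x y : ℝ, 0 < x → x ≤ y → ℓ x ≤ ℓ y)
    (h2 : Tendsto (fun x : ℝ => ℓ (2 * x) / ℓ x) atTop (𝓝 1)) :
    ∃ x₀ : ℝ, 1 ≤ x₀ ∧ ∀ x, x₀ ≤ x → ∀ lam : ℝ, 1 ≤ lam →
      ℓ (lam * x) ≤ Real.sqrt 2 * Real.sqrt lam * ℓ x := by
  have hs2 : (1:ℝ) < Real.sqrt 2 := by
    rw [show (1:ℝ) = Real.sqrt 1 by simp]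
    exact Real.sqrt_lt_sqrt (by norm_num) (by norm_num)
  have hev : ∀ᶠ x : ℝ in atTop, ℓ (2 * x) / ℓ x < Real.sqrt 2 :=
    h2.eventually_lt_const hs2
  obtain ⟨x₁, hx₁⟩ := eventually_atTop.mp hev
  set x₀ := max x₁ 1 with hx₀def
  have hx₀1 : (1:ℝ) ≤ x₀ := le_max_right _ _
  have hstep : ∀ x, x₀ ≤ x → ℓ (2 * x) ≤ Real.sqrt 2 * ℓ x := by
    intro x hx
    have hxpos : 0 < x := lt_of_lt_of_le one_pos (le_trans hx₀1 hx)
    have := hx₁ x (le_trans (le_max_left _ _) hx)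
    have hlp := hpos x hxpos
    calc ℓ (2 * x) = ℓ (2 * x) / ℓ x * ℓ x := by field_simp
      _ ≤ Real.sqrt 2 * ℓ x := by
          apply mul_le_mul_of_nonneg_right (le_of_lt this) (le_of_lt hlp)
  have hdy : ∀ x, x₀ ≤ x → ∀ k : ℕ, ℓ (2 ^ k * x) ≤ (Real.sqrt 2) ^ k * ℓ x := by
    intro x hx k
    induction k with
    | zero => simp
    | succ k ih =>
      have hxk : x₀ ≤ 2 ^ k * x := by
        calc x₀ ≤ x := hx
          _ = 1 * x := (one_mul x).symm
          _ ≤ 2 ^ k * x := by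
              apply mul_le_mul_of_nonneg_right (one_le_pow₀ (by norm_num))
              linarith [le_trans hx₀1 hx]
      calc ℓ (2 ^ (k+1) * x) = ℓ (2 * (2 ^ k * x)) := by ring_nf
        _ ≤ Real.sqrt 2 * ℓ (2 ^ k * x) := hstep _ hxk
        _ ≤ Real.sqrt 2 * ((Real.sqrt 2) ^ k * ℓ x) := by
            apply mul_le_mul_of_nonneg_left ih (by positivity)
        _ = (Real.sqrt 2) ^ (k+1) * ℓ x := by ring
  refine ⟨x₀, hx₀1, ?_⟩
  intro x hx lam hlam
  obtain ⟨k, hk1, hk2⟩ := aux_dyadic lam hlam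
  have hxpos : 0 < x := lt_of_lt_of_le one_pos (le_trans hx₀1 hx)
  have hlampos : 0 < lam := lt_of_lt_of_le one_pos hlam
  calc ℓ (lam * x) ≤ ℓ (2 ^ (k+1) * x) := by
        apply hmono _ _ (by positivity)
        apply mul_le_mul_of_nonneg_right (le_of_lt hk2) (le_of_lt hxpos)
    _ ≤ (Real.sqrt 2) ^ (k+1) * ℓ x := hdy x hx (k+1)
    _ = Real.sqrt 2 * (Real.sqrt 2) ^ k * ℓ x := by ring
    _ ≤ Real.sqrt 2 * Real.sqrt lam * ℓ x := by
        have h1 : (Real.sqrt 2) ^ k ≤ Real.sqrt lam := by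
          rw [← aux_sqrt_pow 2 (by norm_num)]
          exact Real.sqrt_le_sqrt hk1
        have := hpos x hxpos
        apply mul_le_mul_of_nonneg_right _ (le_of_lt this)
        apply mul_le_mul_of_nonneg_left h1 (by positivity)
section
variable (ℓ : ℝ → ℝ)

lemma aux_exp_bound (n : ℕ) (t : ℝ) (ht0 : 0 < t) (htn : t < n) :
    Real.exp (t/4) ≤ (1 + t/(2*n))^n := by
  have hn : (0:ℝ) < n := lt_trans ht0 htn
  set x := t/(2*n) with hx
  have hx0 : 0 < x := by positivity
  have hx1 : x ≤ 1 := by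
    rw [hx, div_le_one (by positivity)]; nlinarith
  have h1 : (1 - x/2) * Real.exp (x/2) ≤ 1 := by
    calc (1 - x/2) * Real.exp (x/2) ≤ Real.exp (-(x/2)) * Real.exp (x/2) := by
          apply mul_le_mul_of_nonneg_right (Real.one_sub_le_exp_neg _) (Real.exp_pos _).le
      _ = 1 := by rw [← Real.exp_add]; simp
  have key : Real.exp (x/2) ≤ 1 + x := by
    nlinarith [Real.exp_pos (x/2)]
  have h2 : (Real.exp (x/2))^n ≤ (1 + x)^n := by
    apply pow_le_pow_left₀ (Real.exp_pos _).le key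
  calc Real.exp (t/4) = Real.exp (n * (x/2)) := by
        rw [hx]; congr 1; field_simp; ring
    _ = (Real.exp (x/2))^n := Real.exp_nat_mul _ n
    _ ≤ (1 + x)^n := h2

lemma aux_main_bound (hpos : ∀ x : ℝ, 0 < x → 0 < ℓ x)
    (hmono : ∀ x y : ℝ, 0 < x → x ≤ y → ℓ x ≤ ℓ y)
    (x₀ : ℝ) (hx₀1 : 1 ≤ x₀)
    (hpot : ∀ x, x₀ ≤ x → ∀ lam : ℝ, 1 ≤ lam →
      ℓ (lam * x) ≤ Real.sqrt 2 * Real.sqrt lam * ℓ x)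
    (n : ℕ) (hn3 : (3:ℝ) ≤ n) (hnx : x₀ ≤ (n:ℝ))
    (t : ℝ) (ht0 : 0 < t) (htn : t < n) :
    Real.sqrt (t * ℓ (2*n/t)) * Real.log (2*n/t) / (1 + t/(2*n))^n
      / (Real.sqrt (ℓ n) * Real.log n)
    ≤ 8 * (t ^ (-(1/4) : ℝ) * Real.exp (-(1/4) * t)
          + t ^ (2:ℝ) * Real.exp (-(1/4) * t)) := by
  have hn : (0:ℝ) < n := lt_trans ht0 htn
  have hln : 0 < ℓ n := hpos _ hn
  have hlogn1 : 1 ≤ Real.log n := by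
    rw [Real.le_log_iff_exp_le hn]
    linarith [Real.exp_one_lt_d9]
  have hlogn0 : 0 < Real.log n := lt_of_lt_of_le one_pos hlogn1
  have h2nt : (2:ℝ) < 2*n/t := by
    rw [lt_div_iff₀ ht0]; nlinarith
  have hlog2nt : 0 < Real.log (2*n/t) := Real.log_pos (by linarith)
  have hst : 0 < Real.sqrt t := Real.sqrt_pos.mpr ht0
  -- (a) bound on ℓ(2n/t)
  have hl : ℓ (2*n/t) ≤ (1 + 2/Real.sqrt t) * ℓ n := by
    by_cases hc : t ≤ 2
    · have hlam : (1:ℝ) ≤ 2/t := by rw [le_div_iff₀ ht0]; linarith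
      have h1 : 2*n/t = (2/t) * n := by field_simp
      rw [h1]
      calc ℓ ((2/t) * n) ≤ Real.sqrt 2 * Real.sqrt (2/t) * ℓ n := hpot _ hnx _ hlam
        _ = (2/Real.sqrt t) * ℓ n := by
            rw [← Real.sqrt_mul (by norm_num)]
            congr 2
            rw [show (2*(2/t)) = 4/t by ring, Real.sqrt_div (by norm_num),
              show (4:ℝ) = 2^2 by norm_num, Real.sqrt_sq (by norm_num)]
        _ ≤ (1 + 2/Real.sqrt t) * ℓ n := by nlinarith
    · push_neg at hc
      have h1 : 2*n/t ≤ n := by rw [div_le_iff₀ ht0]; nlinarith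
      calc ℓ (2*n/t) ≤ ℓ n := hmono _ _ (by positivity) h1
        _ ≤ (1 + 2/Real.sqrt t) * ℓ n := by nlinarith [div_pos two_pos hst]
  -- (b) sqrt bound
  have ha : Real.sqrt (t * ℓ (2*n/t))
      ≤ Real.sqrt (2*(t + Real.sqrt t)) * Real.sqrt (ℓ n) := by
    rw [← Real.sqrt_mul (by positivity)]
    apply Real.sqrt_le_sqrt
    have hts : t / Real.sqrt t = Real.sqrt t := Real.div_sqrt
    have : t * ℓ (2*n/t) ≤ t * ((1 + 2/Real.sqrt t) * ℓ n) :=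
      mul_le_mul_of_nonneg_left hl ht0.le
    calc t * ℓ (2*n/t) ≤ t * ((1 + 2/Real.sqrt t) * ℓ n) := this
      _ = (t + 2*(t/Real.sqrt t)) * ℓ n := by ring
      _ = (t + 2*Real.sqrt t) * ℓ n := by rw [hts]
      _ ≤ 2*(t + Real.sqrt t) * ℓ n := by nlinarith
  -- (c) log bound
  have hlog : Real.log (2*n/t) ≤ (2 + |Real.log t|) * Real.log n := by
    have hexpand : Real.log (2*n/t) = Real.log 2 + Real.log n - Real.log t := by
      rw [Real.log_div (by positivity) (ne_of_gt ht0), Real.log_mul (by norm_num) (ne_of_gt hn)]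
    have hlog2 : Real.log 2 ≤ Real.log n := by linarith [Real.log_two_lt_d9]
    rw [hexpand]
    by_cases hc : 1 ≤ t
    · have h1 : 0 ≤ Real.log t := Real.log_nonneg hc
      have h2 : 0 ≤ |Real.log t| := abs_nonneg _
      nlinarith
    · push_neg at hc
      have h1 : Real.log t < 0 := Real.log_neg ht0 hc
      have h2 : |Real.log t| = -Real.log t := abs_of_neg h1
      nlinarith [abs_nonneg (Real.log t)]
  -- (d) exponential bound
  have hexp := aux_exp_bound n t ht0 htn
  -- combine
  have hcpos : 0 < Real.sqrt (ℓ n) * Real.log n := by positivity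
  have hCpos : (0:ℝ) < (1 + t/(2*n))^n := by positivity
  have hcomb : Real.sqrt (t * ℓ (2*n/t)) * Real.log (2*n/t) / (1 + t/(2*n))^n
      / (Real.sqrt (ℓ n) * Real.log n)
      ≤ Real.sqrt (2*(t + Real.sqrt t)) * (2 + |Real.log t|) * Real.exp (-(t/4)) := by
    rw [div_div]
    have hnum : Real.sqrt (t * ℓ (2*n/t)) * Real.log (2*n/t)
        ≤ (Real.sqrt (2*(t + Real.sqrt t)) * Real.sqrt (ℓ n))
          * ((2 + |Real.log t|) * Real.log n) := by
      apply mul_le_mul ha hlog hlog2nt.le (by positivity)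
    have hden : Real.exp (t/4) * (Real.sqrt (ℓ n) * Real.log n)
        ≤ (1 + t/(2*n))^n * (Real.sqrt (ℓ n) * Real.log n) :=
      mul_le_mul_of_nonneg_right hexp hcpos.le
    calc Real.sqrt (t * ℓ (2*n/t)) * Real.log (2*n/t)
          / ((1 + t/(2*n))^n * (Real.sqrt (ℓ n) * Real.log n))
        ≤ (Real.sqrt (2*(t + Real.sqrt t)) * Real.sqrt (ℓ n))
            * ((2 + |Real.log t|) * Real.log n)
          / (Real.exp (t/4) * (Real.sqrt (ℓ n) * Real.log n)) := by
          apply div_le_div₀ (by positivity) hnum (by positivity) hden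
      _ = Real.sqrt (2*(t + Real.sqrt t)) * (2 + |Real.log t|) * Real.exp (-(t/4)) := by
          rw [Real.exp_neg]
          field_simp
  refine le_trans hcomb ?_
  -- (f) final elementary bound
  have hexpf : Real.exp (-(t/4)) = Real.exp (-(1/4) * t) := by ring_nf
  rw [hexpf]
  have hE : 0 < Real.exp (-(1/4) * t) := Real.exp_pos _
  set s := Real.sqrt t with hsdef
  have hsq : s^2 = t := Real.sq_sqrt ht0.le
  clear_value s
  by_cases hc : t ≤ 1
  · set q := Real.sqrt s with hqdef
    clear_value q
    have hq0 : 0 < q := by rw [hqdef]; exact Real.sqrt_pos.mpr hst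
    have hqs : q * q = s := by rw [hqdef]; exact Real.mul_self_sqrt hst.le
    have hs1 : s ≤ 1 := by
      rw [hsdef, show (1:ℝ) = Real.sqrt 1 by simp]
      exact Real.sqrt_le_sqrt hc
    have hq1 : q ≤ 1 := by
      rw [hqdef, show (1:ℝ) = Real.sqrt 1 by simp]
      exact Real.sqrt_le_sqrt hs1
    have hts : t ≤ s := by nlinarith
    have h1 : Real.sqrt (2*(t+s)) ≤ 2*q := by
      calc Real.sqrt (2*(t+s)) ≤ Real.sqrt (4*s) := Real.sqrt_le_sqrt (by linarith)
        _ = 2*q := by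
            rw [show (4:ℝ)*s = 2^2*s by norm_num, Real.sqrt_mul (by positivity),
              Real.sqrt_sq (by norm_num), hqdef]
    have hlogt : Real.log t = 2 * Real.log s := by
      conv_lhs => rw [← hsq]
      rw [Real.log_pow]; push_cast; ring
    have h2 : |Real.log t| ≤ 2/s := by
      have hlt : Real.log t ≤ 0 := Real.log_nonpos ht0.le hc
      have hinv : Real.log s⁻¹ ≤ s⁻¹ - 1 := Real.log_le_sub_one_of_pos (by positivity)
      rw [Real.log_inv] at hinv
      have : |Real.log t| = -Real.log t := abs_of_nonpos hlt
      rw [this, hlogt]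
      simp only [div_eq_mul_inv]
      linarith
    have hq : q = t ^ ((1/4):ℝ) := by
      rw [hqdef, hsdef, Real.sqrt_eq_rpow, Real.sqrt_eq_rpow, ← Real.rpow_mul ht0.le]
      norm_num
    have hfin : Real.sqrt (2*(t+s)) * (2+|Real.log t|) ≤ 8 * t^(-(1/4):ℝ) := by
      calc Real.sqrt (2*(t+s)) * (2+|Real.log t|) ≤ (2*q)*(2+2/s) := by
            apply mul_le_mul h1 (by linarith) (by positivity) (by positivity)
        _ = 4*q + 4*(q/s) := by ring
        _ = 4*q + 4/q := by
            rw [show q/s = 1/q by rw [← hqs]; field_simp]; ring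
        _ ≤ 8/q := by
            have h4 : 4 ≤ 4/q := by rw [le_div_iff₀ hq0]; nlinarith
            simp only [div_eq_mul_inv] at h4 ⊢
            linarith
        _ = 8 * t^(-(1/4):ℝ) := by
            rw [Real.rpow_neg ht0.le, ← hq, div_eq_mul_inv]
    have h8 : 0 ≤ t^(2:ℝ) * Real.exp (-(1/4)*t) := by positivity
    calc Real.sqrt (2*(t+s)) * (2+|Real.log t|) * Real.exp (-(1/4)*t)
        ≤ 8 * t^(-(1/4):ℝ) * Real.exp (-(1/4)*t) :=
          mul_le_mul_of_nonneg_right hfin hE.le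
      _ ≤ 8 * (t ^ (-(1/4) : ℝ) * Real.exp (-(1/4) * t)
          + t ^ (2:ℝ) * Real.exp (-(1/4) * t)) := by nlinarith
  · push_neg at hc
    have hs1 : 1 ≤ s := by
      rw [hsdef, show (1:ℝ) = Real.sqrt 1 by simp]
      exact Real.sqrt_le_sqrt hc.le
    have hst' : s ≤ t := by nlinarith
    have h1 : Real.sqrt (2*(t+s)) ≤ 2*s := by
      calc Real.sqrt (2*(t+s)) ≤ Real.sqrt (4*t) := Real.sqrt_le_sqrt (by linarith)
        _ = 2*s := by
            rw [show (4:ℝ)*t = 2^2*t by norm_num, Real.sqrt_mul (by positivity),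
              Real.sqrt_sq (by norm_num), hsdef]
    have h2 : 2 + |Real.log t| ≤ 3*t := by
      have hlt : |Real.log t| = Real.log t := abs_of_nonneg (Real.log_nonneg hc.le)
      have := Real.log_le_sub_one_of_pos ht0
      rw [hlt]; linarith
    have hr2 : t^(2:ℝ) = t^2 := Real.rpow_two t
    have hfin : Real.sqrt (2*(t+s)) * (2+|Real.log t|) ≤ 8 * t^(2:ℝ) := by
      calc Real.sqrt (2*(t+s)) * (2+|Real.log t|) ≤ (2*s)*(3*t) := by
            apply mul_le_mul h1 h2 (by positivity) (by positivity)
        _ = 6*(s*t) := by ring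
        _ ≤ 8 * t^(2:ℝ) := by rw [hr2]; nlinarith
    have h8 : 0 ≤ t^(-(1/4):ℝ) * Real.exp (-(1/4)*t) := by positivity
    calc Real.sqrt (2*(t+s)) * (2+|Real.log t|) * Real.exp (-(1/4)*t)
        ≤ 8 * t^(2:ℝ) * Real.exp (-(1/4)*t) :=
          mul_le_mul_of_nonneg_right hfin hE.le
      _ ≤ 8 * (t ^ (-(1/4) : ℝ) * Real.exp (-(1/4) * t)
          + t ^ (2:ℝ) * Real.exp (-(1/4) * t)) := by nlinarith
end

lemma aux_ptwise (ℓ : ℝ → ℝ) (hpos : ∀ x : ℝ, 0 < x → 0 < ℓ x)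
    (hslow : ∀ lam : ℝ, 0 < lam →
      Tendsto (fun x : ℝ => ℓ (lam * x) / ℓ x) atTop (𝓝 1))
    (t : ℝ) (ht : 0 < t) :
    Tendsto (fun n : ℕ => (Set.Ioo (0:ℝ) (n:ℝ)).indicator
        (fun u => Real.sqrt (u * ℓ (2*n/u)) * Real.log (2*n/u) / (1 + u/(2*n))^n
          / (Real.sqrt (ℓ n) * Real.log n)) t) atTop
      (𝓝 (Real.sqrt t * Real.exp (-t/2))) := by
  have hA : Tendsto (fun n : ℕ => Real.sqrt (t * (ℓ (2*(n:ℝ)/t) / ℓ n))) atTop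
      (𝓝 (Real.sqrt t)) := by
    have h0 : Tendsto (fun n : ℕ => ℓ ((2/t) * (n:ℝ)) / ℓ n) atTop (𝓝 1) :=
      (hslow (2/t) (by positivity)).comp tendsto_natCast_atTop_atTop
    have h1 : Tendsto (fun n : ℕ => ℓ (2*(n:ℝ)/t) / ℓ n) atTop (𝓝 1) := by
      refine h0.congr (fun n => ?_)
      congr 2
      field_simp
    have h2 : Tendsto (fun n : ℕ => t * (ℓ (2*(n:ℝ)/t) / ℓ n)) atTop (𝓝 t) := by
      simpa using h1.const_mul t
    have := (Real.continuous_sqrt.tendsto t).comp h2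
    exact this
  have hB : Tendsto (fun n : ℕ => Real.log (2*(n:ℝ)/t) / Real.log n) atTop (𝓝 1) := by
    have hlog : Tendsto (fun n : ℕ => Real.log (n:ℝ)) atTop atTop :=
      Real.tendsto_log_atTop.comp tendsto_natCast_atTop_atTop
    have h0 : Tendsto (fun n : ℕ => (Real.log 2 - Real.log t) * (Real.log (n:ℝ))⁻¹ + 1)
        atTop (𝓝 1) := by
      have := (hlog.inv_tendsto_atTop).const_mul (Real.log 2 - Real.log t)
      simpa using this.add_const 1
    refine h0.congr' ?_
    filter_upwards [eventually_gt_atTop 1] with n hn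
    have hn0' : 0 < n := lt_trans Nat.zero_lt_one hn
    have hn0 : (0:ℝ) < n := by exact_mod_cast hn0'
    have hln : 0 < Real.log n := Real.log_pos (by exact_mod_cast hn)
    rw [Real.log_div (by positivity) (ne_of_gt ht), Real.log_mul (by norm_num) (ne_of_gt hn0)]
    field_simp
    ring
  have hC : Tendsto (fun n : ℕ => ((1 + t/(2*(n:ℝ)))^n)⁻¹) atTop
      (𝓝 (Real.exp (-t/2))) := by
    have h0 := Real.tendsto_one_add_div_pow_exp (t/2)
    have h1 : Tendsto (fun n : ℕ => (1 + t/(2*(n:ℝ)))^n) atTop (𝓝 (Real.exp (t/2))) := by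
      refine h0.congr (fun n => ?_)
      rw [div_div]
    have := h1.inv₀ (Real.exp_ne_zero _)
    rw [← Real.exp_neg] at this
    convert this using 2
    ring
  have hprod := (hA.mul hB).mul hC
  rw [mul_one] at hprod
  refine Tendsto.congr' ?_ hprod
  have hev : ∀ᶠ n : ℕ in atTop, t < (n:ℝ) ∧ (3:ℝ) ≤ (n:ℝ) := by
    filter_upwards [eventually_ge_atTop (⌈t⌉₊ + 3)] with n hn
    constructor
    · calc t ≤ (⌈t⌉₊ : ℝ) := Nat.le_ceil t
        _ < ((⌈t⌉₊ + 3 : ℕ) : ℝ) := by push_cast; linarith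
        _ ≤ n := by exact_mod_cast hn
    · calc (3:ℝ) ≤ ((⌈t⌉₊ + 3 : ℕ) : ℝ) := by push_cast; linarith [Nat.le_ceil t, ht.le]
        _ ≤ n := by exact_mod_cast hn
  filter_upwards [hev] with n ⟨hn1, hn3⟩
  have hn0 : (0:ℝ) < n := by linarith
  have hln : 0 < ℓ n := hpos _ hn0
  have hlogn : 0 < Real.log n := Real.log_pos (by linarith)
  have hCpos : (0:ℝ) < (1 + t/(2*(n:ℝ)))^n := by positivity
  have hmem : t ∈ Set.Ioo (0:ℝ) (n:ℝ) := ⟨ht, hn1⟩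
  rw [Set.indicator_of_mem hmem]
  have hsqrt : Real.sqrt (t * ℓ (2*(n:ℝ)/t))
      = Real.sqrt (t * (ℓ (2*(n:ℝ)/t) / ℓ n)) * Real.sqrt (ℓ n) := by
    have hr : 0 ≤ t * (ℓ (2*(n:ℝ)/t) / ℓ n) :=
      mul_nonneg ht.le (div_nonneg (hpos _ (by positivity)).le hln.le)
    rw [← Real.sqrt_mul hr]
    congr 1
    field_simp
  rw [hsqrt]
  have hC0 : ((1 + t/(2*(n:ℝ)))^n) ≠ 0 := ne_of_gt hCpos
  have hs0 : Real.sqrt (ℓ n) ≠ 0 := ne_of_gt (Real.sqrt_pos.mpr hln)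
  have hl0 : Real.log (n:ℝ) ≠ 0 := ne_of_gt hlogn
  generalize Real.sqrt (t * (ℓ (2*(n:ℝ)/t) / ℓ n)) = A
  generalize hBg : Real.log (2*(n:ℝ)/t) = B
  generalize hCg : ((1 + t/(2*(n:ℝ)))^n : ℝ) = C at hC0
  generalize Real.sqrt (ℓ (n:ℝ)) = S at hs0
  generalize Real.log (n:ℝ) = L at hl0
  field_simp

lemma aux_integrableD :
    IntegrableOn (fun t : ℝ => 8 * (t ^ (-(1/4):ℝ) * Real.exp (-(1/4)*t)
      + t ^ (2:ℝ) * Real.exp (-(1/4)*t))) (Ioi (0:ℝ)) := by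
  have h1 := integrableOn_rpow_mul_exp_neg_mul_rpow
    (show (-1:ℝ) < -(1/4) by norm_num) (show (0:ℝ) < 1 by norm_num) (show (0:ℝ) < 1/4 by norm_num)
  have h2 := integrableOn_rpow_mul_exp_neg_mul_rpow
    (show (-1:ℝ) < (2:ℝ) by norm_num) (show (0:ℝ) < 1 by norm_num) (show (0:ℝ) < 1/4 by norm_num)
  simp only [Real.rpow_one] at h1 h2
  exact (h1.add h2).const_mul 8

lemma aux_integrable_target :
    IntegrableOn (fun t : ℝ => Real.sqrt t * Real.exp (-t/2)) (Ioi (0:ℝ)) := by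
  have h := integrableOn_rpow_mul_exp_neg_mul_rpow
    (show (-1:ℝ) < (1/2:ℝ) by norm_num) (show (0:ℝ) < 1 by norm_num) (show (0:ℝ) < 1/2 by norm_num)
  simp only [Real.rpow_one] at h
  refine h.congr_fun (fun x hx => ?_) measurableSet_Ioi
  rw [Real.sqrt_eq_rpow]
  ring_nf

lemma aux_target_pos :
    0 < ∫ t in Ioi (0:ℝ), Real.sqrt t * Real.exp (-t/2) := by
  rw [setIntegral_pos_iff_support_of_nonneg_ae]
  · refine lt_of_lt_of_le (b := volume (Ioi (0:ℝ) ∩ Ioi 0)) ?_ (measure_mono ?_)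
    · rw [Set.inter_self, Real.volume_Ioi]
      norm_num
    · rintro t ⟨ht, -⟩
      have ht' : (0:ℝ) < t := ht
      have : 0 < Real.sqrt t * Real.exp (-t/2) := by positivity
      exact ⟨Function.mem_support.mpr (ne_of_gt this), ht⟩
  · filter_upwards [ae_restrict_mem measurableSet_Ioi] with t ht
    have : (0:ℝ) < t := ht
    positivity
  · exact aux_integrable_target

lemma aux_meas (ℓ : ℝ → ℝ)
    (hmono : ∀ x y : ℝ, 0 < x → x ≤ y → ℓ x ≤ ℓ y) (n : ℕ) :
    AEStronglyMeasurable ((Set.Ioo (0:ℝ) (n:ℝ)).indicator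
      (fun u => Real.sqrt (u * ℓ (2*n/u)) * Real.log (2*n/u) / (1 + u/(2*n))^n
        / (Real.sqrt (ℓ n) * Real.log n))) (volume.restrict (Ioi 0)) := by
  set L : ℝ → ℝ := fun x => ℓ (max x 1) with hL
  have hLmono : Monotone L := by
    intro a b hab
    exact hmono _ _ (lt_of_lt_of_le one_pos (le_max_right _ _))
      (max_le_max hab (le_refl 1))
  have hLmeas : Measurable L := hLmono.measurable
  have heq : (Set.Ioo (0:ℝ) (n:ℝ)).indicator
      (fun u => Real.sqrt (u * ℓ (2*n/u)) * Real.log (2*n/u) / (1 + u/(2*n))^n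
        / (Real.sqrt (ℓ n) * Real.log n))
      = (Set.Ioo (0:ℝ) (n:ℝ)).indicator
      (fun u => Real.sqrt (u * L (2*n/u)) * Real.log (2*n/u) / (1 + u/(2*n))^n
        / (Real.sqrt (ℓ n) * Real.log n)) := by
    funext u
    by_cases hu : u ∈ Set.Ioo (0:ℝ) (n:ℝ)
    · rw [Set.indicator_of_mem hu, Set.indicator_of_mem hu]
      have hn0 : (0:ℝ) < n := lt_trans hu.1 hu.2
      have h1 : (1:ℝ) ≤ 2*n/u := by
        rw [le_div_iff₀ hu.1]
        nlinarith [hu.2]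
      rw [hL]
      simp only [max_eq_left h1]
    · rw [Set.indicator_of_notMem hu, Set.indicator_of_notMem hu]
  rw [heq]
  have hm1 : Measurable (fun u : ℝ => 2*(n:ℝ)/u) := measurable_const.div measurable_id
  have hmeas : Measurable (fun u : ℝ => Real.sqrt (u * L (2*n/u)) * Real.log (2*n/u)
      / (1 + u/(2*n))^n / (Real.sqrt (ℓ n) * Real.log n)) := by
    apply Measurable.div_const
    apply Measurable.div
    · apply Measurable.mul
      · exact Real.continuous_sqrt.measurable.comp (measurable_id.mul (hLmeas.comp hm1))
      · exact Real.measurable_log.comp hm1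
    · exact ((continuous_const.add (continuous_id.div_const _)).pow n).measurable
  exact ((hmeas.indicator measurableSet_Ioo).aestronglyMeasurable)

/-- For ℓ positive, nondecreasing and slowly varying,
n^{-3/2} ∫_0^n √(t ℓ(2n/t)) log(2n/t) (1+t/(2n))^{-n} dt
  ~ (√(ℓ(n)) log n / n^{3/2}) ∫_0^∞ √t e^{-t/2} dt  as n → ∞. -/
theorem stmt4
    (ℓ : ℝ → ℝ) (hpos : ∀ x : ℝ, 0 < x → 0 < ℓ x)
    (hmono : ∀ x y : ℝ, 0 < x → x ≤ y → ℓ x ≤ ℓ y)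
    (hslow : ∀ lam : ℝ, 0 < lam →
      Tendsto (fun x : ℝ => ℓ (lam * x) / ℓ x) atTop (𝓝 1)) :
    Tendsto (fun n : ℕ =>
      ((n : ℝ) ^ (-(3 : ℝ) / 2) *
        ∫ t in Set.Ioo (0 : ℝ) (n : ℝ),
          Real.sqrt (t * ℓ (2 * n / t)) * Real.log (2 * n / t) / (1 + t / (2 * n)) ^ n)
      / ((Real.sqrt (ℓ n) * Real.log n / (n : ℝ) ^ ((3 : ℝ) / 2)) *
          ∫ t in Set.Ioi (0 : ℝ), Real.sqrt t * Real.exp (-t / 2)))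
      atTop (𝓝 1) := by
  obtain ⟨x₀, hx₀1, hpot⟩ := aux_potter ℓ hpos hmono (hslow 2 two_pos)
  set I : ℝ := ∫ t in Set.Ioi (0:ℝ), Real.sqrt t * Real.exp (-t/2) with hIdef
  have hIpos : 0 < I := aux_target_pos
  set G : ℕ → ℝ → ℝ := fun n => (Set.Ioo (0:ℝ) (n:ℝ)).indicator
      (fun u => Real.sqrt (u * ℓ (2*n/u)) * Real.log (2*n/u) / (1 + u/(2*n))^n
        / (Real.sqrt (ℓ n) * Real.log n)) with hGdef
  have hmeas : ∀ᶠ n : ℕ in atTop,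
      AEStronglyMeasurable (G n) (volume.restrict (Ioi 0)) :=
    Eventually.of_forall (fun n => aux_meas ℓ hmono n)
  have hbound : ∀ᶠ n : ℕ in atTop, ∀ᵐ t ∂(volume.restrict (Ioi (0:ℝ))),
      ‖G n t‖ ≤ 8 * (t ^ (-(1/4):ℝ) * Real.exp (-(1/4)*t)
        + t ^ (2:ℝ) * Real.exp (-(1/4)*t)) := by
    have hev : ∀ᶠ n : ℕ in atTop, (3:ℝ) ≤ (n:ℝ) ∧ x₀ ≤ (n:ℝ) := by
      filter_upwards [eventually_ge_atTop (3 + ⌈x₀⌉₊)] with n hn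
      have h3 : ((3 + ⌈x₀⌉₊ : ℕ) : ℝ) ≤ (n:ℝ) := by exact_mod_cast hn
      push_cast at h3
      constructor
      · linarith [Nat.cast_nonneg (α := ℝ) ⌈x₀⌉₊]
      · linarith [Nat.le_ceil x₀]
    filter_upwards [hev] with n ⟨hn3, hnx⟩
    filter_upwards [ae_restrict_mem measurableSet_Ioi] with t ht
    have ht0 : (0:ℝ) < t := ht
    by_cases hmem : t ∈ Set.Ioo (0:ℝ) (n:ℝ)
    · rw [hGdef]
      simp only [Set.indicator_of_mem hmem]
      have htn : t < (n:ℝ) := hmem.2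
      have hn0 : (0:ℝ) < n := lt_trans ht0 htn
      have hnonneg : 0 ≤ Real.sqrt (t * ℓ (2*n/t)) * Real.log (2*n/t) / (1 + t/(2*n))^n
          / (Real.sqrt (ℓ n) * Real.log n) := by
        have h2nt : (1:ℝ) < 2*n/t := by
          rw [lt_div_iff₀ ht0]; nlinarith
        have hlog : 0 ≤ Real.log (2*n/t) := Real.log_nonneg h2nt.le
        have hlogn : 0 ≤ Real.log (n:ℝ) := Real.log_nonneg (by linarith)
        have h1 : (0:ℝ) ≤ (1 + t/(2*(n:ℝ)))^n := by positivity
        have h2 : (0:ℝ) ≤ Real.sqrt (ℓ n) := Real.sqrt_nonneg _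
        positivity
      rw [Real.norm_eq_abs, abs_of_nonneg hnonneg]
      exact aux_main_bound ℓ hpos hmono x₀ hx₀1 hpot n hn3 hnx t ht0 htn
    · rw [hGdef]
      simp only [Set.indicator_of_notMem hmem]
      rw [norm_zero]
      positivity
  have hlim : ∀ᵐ t ∂(volume.restrict (Ioi (0:ℝ))),
      Tendsto (fun n : ℕ => G n t) atTop (𝓝 (Real.sqrt t * Real.exp (-t/2))) := by
    filter_upwards [ae_restrict_mem measurableSet_Ioi] with t ht
    exact aux_ptwise ℓ hpos hslow t ht
  have hDCT : Tendsto (fun n : ℕ => ∫ t in Set.Ioi (0:ℝ), G n t) atTop (𝓝 I) := by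
    rw [hIdef]
    exact tendsto_integral_filter_of_dominated_convergence _ hmeas hbound aux_integrableD hlim
  have hInt : ∀ n : ℕ, (∫ t in Set.Ioi (0:ℝ), G n t)
      = (∫ t in Set.Ioo (0:ℝ) (n:ℝ),
          Real.sqrt (t * ℓ (2*n/t)) * Real.log (2*n/t) / (1 + t/(2*n))^n)
        / (Real.sqrt (ℓ n) * Real.log n) := by
    intro n
    rw [hGdef]
    rw [MeasureTheory.integral_indicator measurableSet_Ioo]
    rw [Measure.restrict_restrict measurableSet_Ioo,
      Set.inter_eq_left.mpr Set.Ioo_subset_Ioi_self]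
    exact integral_div _ _
  have key : Tendsto (fun n : ℕ => (∫ t in Set.Ioi (0:ℝ), G n t) / I) atTop (𝓝 (I / I)) :=
    hDCT.div_const I
  rw [div_self (ne_of_gt hIpos)] at key
  refine key.congr' ?_
  filter_upwards [eventually_ge_atTop 3] with n hn
  have hn3 : (3:ℝ) ≤ (n:ℝ) := by exact_mod_cast hn
  have hn0 : (0:ℝ) < n := by linarith
  have hln : 0 < ℓ n := hpos _ hn0
  have hlogn : 0 < Real.log n := Real.log_pos (by linarith)
  have hc : 0 < Real.sqrt (ℓ n) * Real.log n := by positivity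
  have hP : 0 < (n:ℝ) ^ ((3:ℝ)/2) := Real.rpow_pos_of_pos hn0 _
  have hPneg : (n:ℝ) ^ (-(3:ℝ)/2) = ((n:ℝ) ^ ((3:ℝ)/2))⁻¹ := by
    rw [show (-(3:ℝ)/2) = -((3:ℝ)/2) by ring, Real.rpow_neg hn0.le]
  rw [hInt n, hPneg]
  have hc' : Real.sqrt (ℓ n) * Real.log (n:ℝ) ≠ 0 := ne_of_gt hc
  have hP' : ((n:ℝ) ^ ((3:ℝ)/2)) ≠ 0 := ne_of_gt hP
  have hI' : I ≠ 0 := ne_of_gt hIpos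
  generalize (∫ t in Set.Ioo (0:ℝ) (n:ℝ),
    Real.sqrt (t * ℓ (2*n/t)) * Real.log (2*n/t) / (1 + t/(2*n))^n) = A
  generalize hcg : Real.sqrt (ℓ (n:ℝ)) * Real.log (n:ℝ) = c at hc'
  generalize hPg : ((n:ℝ) ^ ((3:ℝ)/2) : ℝ) = P at hP'
  field_simp
end

section
/- Let θ be a measure-preserving transformation of a probability space, T the Koopman operator, U_n = T + T² + ⋯ + T^n, and for η ∈ L²(P) set η* = sup_{n≥1} U_n|η|/n. Then E[√((η²)*)] ≤ 2‖η‖_{L²}, where (η²)* = sup_{n≥1} U_n(η²)/n. -/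
open MeasureTheory Filter Topology ENNReal

namespace Stmt11Aux

set_option linter.unusedSectionVars false

variable {Ω : Type*} [MeasurableSpace Ω]

/-- Birkhoff sum. -/
noncomputable def birk (θ : Ω → Ω) (g : Ω → ℝ) (n : ℕ) (ω : Ω) : ℝ :=
  ∑ j ∈ Finset.range n, g (θ^[j] ω)

/-- Running maximum of Birkhoff sums (including the empty sum 0). -/
noncomputable def maxb (θ : Ω → Ω) (g : Ω → ℝ) : ℕ → Ω → ℝ
  | 0 => fun _ => 0
  | (N+1) => fun ω => max (maxb θ g N ω) (birk θ g (N+1) ω)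

variable {θ : Ω → Ω} {g : Ω → ℝ}

lemma birk_succ (n : ℕ) (ω : Ω) :
    birk θ g (n+1) ω = g ω + birk θ g n (θ ω) := by
  simp only [birk, Finset.sum_range_succ']
  simp [Function.iterate_succ_apply, add_comm]

lemma maxb_nonneg (N : ℕ) (ω : Ω) : 0 ≤ maxb θ g N ω := by
  induction N with
  | zero => simp [maxb]
  | succ N ih => exact le_trans ih (le_max_left _ _)

lemma maxb_le_succ (N : ℕ) (ω : Ω) : maxb θ g N ω ≤ maxb θ g (N+1) ω :=
  le_max_left _ _

lemma maxb_succ_eq (N : ℕ) (ω : Ω) :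
    maxb θ g (N+1) ω = max 0 (g ω + maxb θ g N (θ ω)) := by
  induction N with
  | zero =>
      simp [maxb, birk_succ, birk]
  | succ N ih =>
      show max (maxb θ g (N+1) ω) (birk θ g (N+2) ω) = _
      rw [ih, birk_succ]
      have : maxb θ g (N+1) (θ ω) = max (maxb θ g N (θ ω)) (birk θ g (N+1) (θ ω)) := rfl
      rw [this, ← max_add_add_left, max_assoc]

lemma maxb_pos_iff (N : ℕ) (ω : Ω) :
    0 < maxb θ g (N+1) ω ↔ ∃ n ≤ N, 0 < birk θ g (n+1) ω := by
  induction N with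
  | zero =>
      simp [maxb]
  | succ N ih =>
      show 0 < max (maxb θ g (N+1) ω) (birk θ g (N+2) ω) ↔ _
      rw [lt_max_iff, ih]
      constructor
      · rintro (⟨n, hn, h⟩ | h)
        · exact ⟨n, hn.trans (Nat.le_succ N), h⟩
        · exact ⟨N+1, le_rfl, h⟩
      · rintro ⟨n, hn, h⟩
        rcases Nat.lt_or_ge n (N+1) with h' | h'
        · exact Or.inl ⟨n, Nat.lt_succ_iff.mp h', h⟩
        · have hn' : n = N+1 := le_antisymm hn h'
          subst hn'
          exact Or.inr h

lemma measurable_birk (hθ : Measurable θ) (hg : Measurable g) (n : ℕ) :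
    Measurable (birk θ g n) := by
  apply Finset.measurable_sum
  intro j _
  exact hg.comp (hθ.iterate j)

lemma measurable_maxb (hθ : Measurable θ) (hg : Measurable g) (N : ℕ) :
    Measurable (maxb θ g N) := by
  induction N with
  | zero => exact measurable_const
  | succ N ih => exact ih.max (measurable_birk hθ hg (N+1))

end Stmt11Aux

namespace Stmt11Aux

variable {Ω : Type*} [MeasurableSpace Ω] {θ : Ω → Ω} {g : Ω → ℝ}
variable {P : Measure Ω} [IsProbabilityMeasure P]

set_option linter.unusedSectionVars false

lemma maxb_mono (ω : Ω) : Monotone (fun N => maxb θ g N ω) :=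
  monotone_nat_of_le_succ (fun N => maxb_le_succ N ω)

lemma integrable_birk (hθ : MeasurePreserving θ P P) (hg : Integrable g P) (n : ℕ) :
    Integrable (birk θ g n) P := by
  apply integrable_finset_sum
  intro j _
  exact ((hθ.iterate j).integrable_comp hg.1).mpr hg

lemma integrable_maxb (hθ : MeasurePreserving θ P P) (hg : Integrable g P) (N : ℕ) :
    Integrable (maxb θ g N) P := by
  induction N with
  | zero => exact integrable_const 0
  | succ N ih => exact ih.sup (integrable_birk hθ hg (N+1))

lemma hopf (hθ : MeasurePreserving θ P P) (hgm : Measurable g) (hg : Integrable g P) (N : ℕ) :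
    0 ≤ ∫ ω in {ω | 0 < maxb θ g (N+1) ω}, g ω ∂P := by
  set E := {ω | 0 < maxb θ g (N+1) ω} with hE
  have hEm : MeasurableSet E :=
    measurableSet_lt measurable_const (measurable_maxb hθ.measurable hgm (N+1))
  have hMi : ∀ K, Integrable (maxb θ g K) P := integrable_maxb hθ hg
  have hMθi : Integrable (fun ω => maxb θ g N (θ ω)) P :=
    (hθ.integrable_comp (hMi N).1).mpr (hMi N)
  have key : ∀ ω ∈ E, g ω = maxb θ g (N+1) ω - maxb θ g N (θ ω) := by
    intro ω hω
    have h1 := maxb_succ_eq (θ := θ) (g := g) N ω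
    have h2 : maxb θ g (N+1) ω = g ω + maxb θ g N (θ ω) := by
      rcases max_cases (0:ℝ) (g ω + maxb θ g N (θ ω)) with ⟨h,_⟩|⟨h,_⟩
      · exfalso
        have : (0:ℝ) < 0 := by rw [hE] at hω; simp only [Set.mem_setOf_eq, h1, h] at hω; exact hω
        exact lt_irrefl _ this
      · rw [h1, h]
    linarith
  have e1 : ∫ ω in E, g ω ∂P = ∫ ω in E, (maxb θ g (N+1) ω - maxb θ g N (θ ω)) ∂P :=
    setIntegral_congr_fun hEm key
  rw [e1, integral_sub ((hMi (N+1)).restrict) (hMθi.restrict)]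
  have e2 : ∫ ω in E, maxb θ g (N+1) ω ∂P = ∫ ω, maxb θ g (N+1) ω ∂P := by
    apply setIntegral_eq_integral_of_forall_compl_eq_zero
    intro ω hω
    have h3 := maxb_nonneg (θ := θ) (g := g) (N+1) ω
    have h4 : ¬ (0 < maxb θ g (N+1) ω) := hω
    linarith
  have e3 : ∫ ω in E, maxb θ g N (θ ω) ∂P ≤ ∫ ω, maxb θ g N (θ ω) ∂P :=
    setIntegral_le_integral hMθi (Filter.Eventually.of_forall fun ω => maxb_nonneg N (θ ω))
  have e4 : ∫ ω, maxb θ g N (θ ω) ∂P = ∫ ω, maxb θ g N ω ∂P := by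
    have hms : AEStronglyMeasurable (maxb θ g N) (Measure.map θ P) := by
      rw [hθ.map_eq]; exact (hMi N).1
    have := integral_map (μ := P) hθ.measurable.aemeasurable hms
    rw [hθ.map_eq] at this
    exact this.symm
  have e5 : ∫ ω, maxb θ g N ω ∂P ≤ ∫ ω, maxb θ g (N+1) ω ∂P :=
    integral_mono (hMi N) (hMi (N+1)) (fun ω => maxb_le_succ N ω)
  rw [e2]
  linarith

lemma weak (hθ : MeasurePreserving θ P P) {f : Ω → ℝ} (hfm : Measurable f)
    (hfi : Integrable f P) (hf0 : ∀ ω, 0 ≤ f ω) {ℓ : ℝ} (hℓ : 0 < ℓ) :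
    ENNReal.ofReal ℓ * P {ω | ∃ n : ℕ, ℓ * (n+1) < birk θ f (n+1) ω}
      ≤ ENNReal.ofReal (∫ ω, f ω ∂P) := by
  set g : Ω → ℝ := fun ω => f ω - ℓ with hgdef
  have hgm : Measurable g := hfm.sub measurable_const
  have hgi : Integrable g P := hfi.sub (integrable_const ℓ)
  have hbirk : ∀ n ω, birk θ g n ω = birk θ f n ω - n * ℓ := by
    intro n ω
    simp [birk, hgdef, Finset.sum_sub_distrib]
  have hset : {ω | ∃ n : ℕ, ℓ * (n+1) < birk θ f (n+1) ω}
      = ⋃ N : ℕ, {ω | 0 < maxb θ g (N+1) ω} := by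
    ext ω
    simp only [Set.mem_setOf_eq, Set.mem_iUnion]
    constructor
    · rintro ⟨n, hn⟩
      refine ⟨n, (maxb_pos_iff n ω).mpr ⟨n, le_rfl, ?_⟩⟩
      rw [hbirk]
      push_cast
      linarith
    · rintro ⟨N, hN⟩
      obtain ⟨n, _, hn⟩ := (maxb_pos_iff N ω).mp hN
      refine ⟨n, ?_⟩
      rw [hbirk] at hn
      push_cast at hn
      linarith
  have hmono : Monotone (fun N => {ω | 0 < maxb θ g (N+1) ω}) := by
    intro a b hab ω hω
    exact lt_of_lt_of_le hω (maxb_mono ω (Nat.succ_le_succ hab))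
  rw [hset, (hmono.directed_le).measure_iUnion, ENNReal.mul_iSup]
  refine iSup_le fun N => ?_
  have h0 := hopf hθ hgm hgi N
  set E := {ω | 0 < maxb θ g (N+1) ω} with hE
  have hint : ∫ ω in E, g ω ∂P = ∫ ω in E, f ω ∂P - ℓ * (P E).toReal := by
    rw [hgdef]
    rw [integral_sub (hfi.restrict) ((integrable_const ℓ).restrict)]
    rw [setIntegral_const]
    simp [mul_comm, measureReal_def]
  have h1 : ℓ * (P E).toReal ≤ ∫ ω in E, f ω ∂P := by
    rw [hint] at h0; linarith
  have h2 : ∫ ω in E, f ω ∂P ≤ ∫ ω, f ω ∂P :=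
    setIntegral_le_integral hfi (Filter.Eventually.of_forall hf0)
  calc ENNReal.ofReal ℓ * P E = ENNReal.ofReal (ℓ * (P E).toReal) := by
        rw [ENNReal.ofReal_mul hℓ.le, ENNReal.ofReal_toReal (measure_ne_top P E)]
      _ ≤ ENNReal.ofReal (∫ ω, f ω ∂P) := ENNReal.ofReal_le_ofReal (h1.trans h2)

end Stmt11Aux

namespace Stmt11Aux

set_option linter.unusedSectionVars false

variable {Ω : Type*} [MeasurableSpace Ω] {P : Measure Ω} [IsProbabilityMeasure P] {θ : Ω → Ω}

set_option linter.unusedSectionVars false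

lemma measurable_M {η : Ω → ℝ} (hθm : Measurable θ) (hηm : Measurable η) :
    Measurable (fun ω => ⨆ n : ℕ,
      (∑ j ∈ Finset.range (n + 1), ENNReal.ofReal ((η (θ^[j + 1] ω)) ^ 2))
        / ((n : ℝ≥0∞) + 1)) := by
  apply Measurable.iSup
  intro n
  apply Measurable.div _ measurable_const
  apply Finset.measurable_sum
  intro j _
  exact ENNReal.measurable_ofReal.comp (((hηm.comp (hθm.iterate (j+1)))).pow_const 2)

lemma weakM (hθ : MeasurePreserving θ P P) {η : Ω → ℝ} (hηm : Measurable η)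
    (hfi : Integrable (fun ω => η ω ^ 2) P) {s : ℝ} (hs : 0 < s) :
    ENNReal.ofReal s * P {ω | ENNReal.ofReal s < ⨆ n : ℕ,
        (∑ j ∈ Finset.range (n + 1), ENNReal.ofReal ((η (θ^[j + 1] ω)) ^ 2))
          / ((n : ℝ≥0∞) + 1)}
      ≤ ∫⁻ ω, ENNReal.ofReal (η ω ^ 2) ∂P := by
  set f : Ω → ℝ := fun ω => η ω ^ 2 with hfdef
  have hfm : Measurable f := hηm.pow_const 2
  have hf0 : ∀ ω, 0 ≤ f ω := fun ω => sq_nonneg _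
  have hsum : ∀ n (ω : Ω), (∑ j ∈ Finset.range (n+1), ENNReal.ofReal ((η (θ^[j+1] ω)) ^ 2))
      = ENNReal.ofReal (birk θ f (n+1) (θ ω)) := by
    intro n ω
    rw [birk, ← ENNReal.ofReal_sum_of_nonneg (fun i _ => hf0 _)]
    congr 1
  have hseteq : {ω | ENNReal.ofReal s < ⨆ n : ℕ,
        (∑ j ∈ Finset.range (n + 1), ENNReal.ofReal ((η (θ^[j + 1] ω)) ^ 2))
          / ((n : ℝ≥0∞) + 1)}
      = θ ⁻¹' {x | ∃ n : ℕ, s * (n+1) < birk θ f (n+1) x} := by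
    ext ω
    simp only [Set.mem_setOf_eq, Set.mem_preimage, lt_iSup_iff]
    refine exists_congr fun n => ?_
    rw [hsum n ω]
    have hne0 : ((n : ℝ≥0∞) + 1) ≠ 0 := by simp
    have hnetop : ((n : ℝ≥0∞) + 1) ≠ ∞ := by
      simp
    rw [ENNReal.lt_div_iff_mul_lt (Or.inl hne0) (Or.inl hnetop)]
    have : ENNReal.ofReal s * ((n : ℝ≥0∞) + 1) = ENNReal.ofReal (s * ((n:ℝ)+1)) := by
      rw [ENNReal.ofReal_mul hs.le]
      congr 1
      rw [ENNReal.ofReal_add (by positivity) zero_le_one]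
      simp [ENNReal.ofReal_natCast]
    rw [this, ENNReal.ofReal_lt_ofReal_iff_of_nonneg (by positivity)]
  rw [hseteq]
  have hA : MeasurableSet {x : Ω | ∃ n : ℕ, s * (n+1) < birk θ f (n+1) x} := by
    rw [Set.setOf_exists]
    apply MeasurableSet.iUnion
    intro n
    exact measurableSet_lt measurable_const (by
      apply Finset.measurable_sum
      intro j _
      exact hfm.comp (hθ.measurable.iterate j))
  rw [hθ.measure_preimage hA.nullMeasurableSet]
  calc ENNReal.ofReal s * P {x | ∃ n : ℕ, s * (n+1) < birk θ f (n+1) x}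
      ≤ ENNReal.ofReal (∫ ω, f ω ∂P) := weak hθ hfm hfi hf0 hs
    _ = ∫⁻ ω, ENNReal.ofReal (f ω) ∂P :=
        ofReal_integral_eq_lintegral_ofReal hfi (Filter.Eventually.of_forall hf0)

end Stmt11Aux

namespace Stmt11Aux

set_option linter.unusedSectionVars false

variable {Ω : Type*} [MeasurableSpace Ω] {P : Measure Ω} [IsProbabilityMeasure P] {θ : Ω → Ω}


lemma main_meas (hθ : MeasurePreserving θ P P)
    (η : Ω → ℝ) (hηm : Measurable η) (hη : MemLp η 2 P) (ha0 : eLpNorm η 2 P ≠ 0) :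
    (∫⁻ ω, (⨆ n : ℕ,
        (∑ j ∈ Finset.range (n + 1), ENNReal.ofReal ((η (θ^[j + 1] ω)) ^ 2))
          / ((n : ℝ≥0∞) + 1)) ^ ((1 : ℝ) / 2) ∂P)
      ≤ 2 * eLpNorm η 2 P := by
  have hfi : Integrable (fun ω => η ω ^ 2) P := hη.integrable_sq
  set M : Ω → ℝ≥0∞ := fun ω => ⨆ n : ℕ,
      (∑ j ∈ Finset.range (n + 1), ENNReal.ofReal ((η (θ^[j + 1] ω)) ^ 2)) / ((n : ℝ≥0∞) + 1)
    with hMdef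
  have hMm : Measurable M := measurable_M hθ.measurable hηm
  set I : ℝ≥0∞ := ∫⁻ ω, ENNReal.ofReal (η ω ^ 2) ∂P with hIdef
  set a : ℝ≥0∞ := eLpNorm η 2 P with hadef
  have hatop : a ≠ ∞ := hη.2.ne
  -- a = I ^ (1/2)
  have ha2 : a = I ^ ((1:ℝ)/2) := by
    rw [hadef, eLpNorm_eq_lintegral_rpow_enorm_toReal two_ne_zero ENNReal.ofNat_ne_top]
    congr 1
    apply lintegral_congr
    intro ω
    rw [ENNReal.toReal_ofNat, Real.enorm_eq_ofReal_abs,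
      ENNReal.ofReal_rpow_of_nonneg (abs_nonneg _) (by norm_num : (0:ℝ) ≤ 2)]
    congr 1
    rw [show ((2:ℝ)) = ((2:ℕ):ℝ) by norm_num, Real.rpow_natCast, sq_abs]
  have hIa : I = a ^ (2:ℝ) := by
    rw [ha2, ← ENNReal.rpow_mul]
    norm_num
  have hItop : I ≠ ∞ := by
    rw [hIa]
    exact ENNReal.rpow_ne_top_of_nonneg (by norm_num) hatop
  have hweak' : ∀ s : ℝ, 0 < s → P {ω | ENNReal.ofReal s < M ω} ≤ I / ENNReal.ofReal s := by
    intro s hs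
    rw [ENNReal.le_div_iff_mul_le (Or.inl (ENNReal.ofReal_pos.mpr hs).ne')
      (Or.inl ENNReal.ofReal_ne_top), mul_comm]
    exact weakM hθ hηm hfi hs
  have hSnull : P {ω | M ω = ∞} = 0 := by
    by_contra hS0
    obtain ⟨n, hn⟩ := ENNReal.exists_nat_gt
      ((ENNReal.div_lt_top hItop hS0).ne)
    have h1 : P {ω | M ω = ∞} ≤ I / ENNReal.ofReal ((n:ℝ)+1) := by
      refine le_trans (measure_mono ?_) (hweak' _ (by positivity))
      intro ω hω
      simp only [Set.mem_setOf_eq] at hω ⊢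
      rw [hω]
      exact ENNReal.ofReal_lt_top
    have h2 : I < n * P {ω | M ω = ∞} := by
      rw [ENNReal.div_lt_iff (Or.inl hS0) (Or.inl (measure_ne_top P _))] at hn
      exact hn
    have h3 : (n : ℝ≥0∞) * P {ω | M ω = ∞} ≤ I := by
      calc (n : ℝ≥0∞) * P {ω | M ω = ∞}
          ≤ ENNReal.ofReal ((n:ℝ)+1) * P {ω | M ω = ∞} := by
            gcongr
            rw [ENNReal.ofReal_add (by positivity) zero_le_one]
            simp [ENNReal.ofReal_natCast]
        _ ≤ I :=
            le_trans (le_of_eq (mul_comm _ _))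
              ((ENNReal.le_div_iff_mul_le (Or.inl (ENNReal.ofReal_pos.mpr (by positivity)).ne')
                (Or.inl ENNReal.ofReal_ne_top)).mp h1)
    exact absurd (h2.trans_le h3) (lt_irrefl _)
  have hae : ∀ᵐ ω ∂P, M ω ≠ ∞ := by
    rw [ae_iff]
    simpa using hSnull
  set q : Ω → ℝ := fun ω => ((M ω) ^ ((1:ℝ)/2)).toReal with hqdef
  have hqm : Measurable q :=
    ENNReal.measurable_toReal.comp ((hMm.pow_const _))
  have hcongr : ∫⁻ ω, (M ω) ^ ((1:ℝ)/2) ∂P = ∫⁻ ω, ENNReal.ofReal (q ω) ∂P := by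
    apply lintegral_congr_ae
    filter_upwards [hae] with ω hω
    rw [hqdef, ENNReal.ofReal_toReal (ENNReal.rpow_ne_top_of_nonneg (by norm_num) hω)]
  rw [hcongr, lintegral_eq_lintegral_meas_lt P
    (Filter.Eventually.of_forall fun ω => ENNReal.toReal_nonneg) hqm.aemeasurable]
  have hbound : ∀ t : ℝ, 0 < t → P {x | t < q x} ≤ I / ENNReal.ofReal (t^2) := by
    intro t ht
    have hsub : {x | t < q x} ⊆ {x | ENNReal.ofReal (t^2) < M x} ∪ {x | M x = ∞} := by
      intro ω hω
      by_cases hMω : M ω = ∞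
      · exact Or.inr hMω
      left
      simp only [Set.mem_setOf_eq] at hω ⊢
      have h1 : ENNReal.ofReal t < (M ω) ^ ((1:ℝ)/2) := by
        rw [ENNReal.ofReal_lt_iff_lt_toReal ht.le
          (ENNReal.rpow_ne_top_of_nonneg (by norm_num) hMω)]
        exact hω
      have h2 := ENNReal.rpow_lt_rpow h1 (by norm_num : (0:ℝ) < 2)
      rw [← ENNReal.rpow_mul] at h2
      norm_num at h2
      rw [ENNReal.ofReal_pow ht.le]
      exact h2
    calc P {x | t < q x} ≤ P ({x | ENNReal.ofReal (t^2) < M x} ∪ {x | M x = ∞}) :=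
          measure_mono hsub
      _ ≤ P {x | ENNReal.ofReal (t^2) < M x} + P {x | M x = ∞} := measure_union_le _ _
      _ = P {x | ENNReal.ofReal (t^2) < M x} := by rw [hSnull, add_zero]
      _ ≤ I / ENNReal.ofReal (t^2) := hweak' _ (by positivity)
  set aR : ℝ := a.toReal with haRdef
  have haR : 0 < aR := ENNReal.toReal_pos ha0 hatop
  have hsplit : Set.Ioi (0:ℝ) = Set.Ioc 0 aR ∪ Set.Ioi aR :=
    (Set.Ioc_union_Ioi_eq_Ioi haR.le).symm
  rw [hsplit, lintegral_union measurableSet_Ioi Set.Ioc_disjoint_Ioi_same]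
  have hpart1 : ∫⁻ t in Set.Ioc (0:ℝ) aR, P {x | t < q x} ≤ a := by
    calc ∫⁻ t in Set.Ioc (0:ℝ) aR, P {x | t < q x}
        ≤ ∫⁻ _ in Set.Ioc (0:ℝ) aR, 1 :=
          setLIntegral_mono measurable_const fun t _ => prob_le_one
      _ = volume (Set.Ioc (0:ℝ) aR) := setLIntegral_one _
      _ = ENNReal.ofReal aR := by rw [Real.volume_Ioc, sub_zero]
      _ = a := ENNReal.ofReal_toReal hatop
  have hg2m : Measurable (fun t : ℝ => I / ENNReal.ofReal (t^2)) := by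
    apply Measurable.div measurable_const
    exact ENNReal.measurable_ofReal.comp (measurable_id.pow_const 2)
  have hpart2 : ∫⁻ t in Set.Ioi aR, P {x | t < q x} ≤ a := by
    calc ∫⁻ t in Set.Ioi aR, P {x | t < q x}
        ≤ ∫⁻ t in Set.Ioi aR, I / ENNReal.ofReal (t^2) :=
          setLIntegral_mono hg2m fun t ht => hbound t (haR.trans ht)
      _ = I * ∫⁻ t in Set.Ioi aR, (ENNReal.ofReal (t^2))⁻¹ := by
          simp_rw [div_eq_mul_inv]
          rw [lintegral_const_mul' _ _ hItop]
      _ = I * ENNReal.ofReal (aR⁻¹) := by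
          congr 1
          have hcg : ∀ t ∈ Set.Ioi aR, (ENNReal.ofReal (t^2))⁻¹ = ENNReal.ofReal (t ^ (-2:ℝ)) := by
            intro t ht
            have ht0 : 0 < t := haR.trans ht
            rw [← ENNReal.ofReal_inv_of_pos (by positivity)]
            congr 1
            rw [Real.rpow_neg ht0.le, show ((2:ℝ)) = ((2:ℕ):ℝ) by norm_num, Real.rpow_natCast]
          rw [setLIntegral_congr_fun measurableSet_Ioi hcg]
          rw [← ofReal_integral_eq_lintegral_ofReal
            (integrableOn_Ioi_rpow_of_lt (by norm_num) haR)
            (by filter_upwards [self_mem_ae_restrict measurableSet_Ioi] with t ht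
                exact Real.rpow_nonneg (haR.trans ht).le _)]
          rw [integral_Ioi_rpow_of_lt (by norm_num) haR]
          norm_num [Real.rpow_neg_one]
      _ = I * a⁻¹ := by
          rw [ENNReal.ofReal_inv_of_pos haR, ENNReal.ofReal_toReal hatop]
      _ = a := by
          rw [hIa, show (2:ℝ) = ((2:ℕ):ℝ) by norm_num, ENNReal.rpow_natCast, pow_two,
            mul_assoc, ENNReal.mul_inv_cancel ha0 hatop, mul_one]
  rw [hadef] at hpart1 hpart2 ⊢
  rw [two_mul]
  exact add_le_add hpart1 hpart2


end Stmt11Aux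

/-- For θ measure-preserving on a probability space and
η square-integrable, with (η²)* = sup_{n≥1} (Σ_{j=1}^n (η∘θ^j)²)/n,
one has E[√((η²)*)] ≤ 2 ‖η‖_{L²}. -/
theorem stmt11
    {Ω : Type*} [MeasurableSpace Ω] (P : Measure Ω) [IsProbabilityMeasure P]
    (θ : Ω → Ω) (hθ : MeasurePreserving θ P P)
    (η : Ω → ℝ) (hη : MemLp η 2 P) :
    (∫⁻ ω, (⨆ n : ℕ,
        (∑ j ∈ Finset.range (n + 1), ENNReal.ofReal ((η (θ^[j + 1] ω)) ^ 2))
          / ((n : ℝ≥0∞) + 1)) ^ ((1 : ℝ) / 2) ∂P)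
      ≤ 2 * eLpNorm η 2 P := by
  set η' : Ω → ℝ := hη.1.mk η with hη'def
  have hη'm : Measurable η' := hη.1.stronglyMeasurable_mk.measurable
  have haeq : η =ᵐ[P] η' := hη.1.ae_eq_mk
  have hη' : MemLp η' 2 P := (memLp_congr_ae haeq).mp hη
  have heq : eLpNorm η 2 P = eLpNorm η' 2 P := eLpNorm_congr_ae haeq
  have hcomp : ∀ j : ℕ, (fun ω => η (θ^[j+1] ω)) =ᵐ[P] (fun ω => η' (θ^[j+1] ω)) :=
    fun j => (hθ.iterate (j+1)).quasiMeasurePreserving.ae_eq_comp haeq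
  have hall : ∀ᵐ ω ∂P, ∀ j : ℕ, η (θ^[j+1] ω) = η' (θ^[j+1] ω) := ae_all_iff.mpr hcomp
  have hLHS : (∫⁻ ω, (⨆ n : ℕ,
        (∑ j ∈ Finset.range (n + 1), ENNReal.ofReal ((η (θ^[j + 1] ω)) ^ 2))
          / ((n : ℝ≥0∞) + 1)) ^ ((1 : ℝ) / 2) ∂P)
      = (∫⁻ ω, (⨆ n : ℕ,
        (∑ j ∈ Finset.range (n + 1), ENNReal.ofReal ((η' (θ^[j + 1] ω)) ^ 2))
          / ((n : ℝ≥0∞) + 1)) ^ ((1 : ℝ) / 2) ∂P) := by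
    apply lintegral_congr_ae
    filter_upwards [hall] with ω hω
    congr 1
    refine iSup_congr fun n => ?_
    congr 1
    exact Finset.sum_congr rfl fun j _ => by rw [hω j]
  rw [hLHS, heq]
  by_cases ha0 : eLpNorm η' 2 P = 0
  · have hz : η' =ᵐ[P] 0 := (eLpNorm_eq_zero_iff hη'.1 two_ne_zero).mp ha0
    have hcomp0 : ∀ j : ℕ, (fun ω => η' (θ^[j+1] ω)) =ᵐ[P] (fun _ => (0:ℝ)) :=
      fun j => (hθ.iterate (j+1)).quasiMeasurePreserving.ae_eq_comp hz
    have hall0 : ∀ᵐ ω ∂P, ∀ j : ℕ, η' (θ^[j+1] ω) = 0 := ae_all_iff.mpr hcomp0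
    have : (∫⁻ ω, (⨆ n : ℕ,
        (∑ j ∈ Finset.range (n + 1), ENNReal.ofReal ((η' (θ^[j + 1] ω)) ^ 2))
          / ((n : ℝ≥0∞) + 1)) ^ ((1 : ℝ) / 2) ∂P) = 0 := by
      rw [lintegral_eq_zero_iff]
      · filter_upwards [hall0] with ω hω
        have : ∀ n : ℕ, (∑ j ∈ Finset.range (n + 1),
            ENNReal.ofReal ((η' (θ^[j + 1] ω)) ^ 2)) / ((n : ℝ≥0∞) + 1) = 0 := by
          intro n
          rw [Finset.sum_congr rfl fun j _ => by rw [hω j]]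
          simp
        simp only [Pi.zero_apply, this, iSup_const]
        exact ENNReal.zero_rpow_of_pos (by norm_num)
      · exact ((Stmt11Aux.measurable_M hθ.measurable hη'm).pow_const _)
    rw [this]
    exact zero_le
  · exact Stmt11Aux.main_meas hθ η' hη'm hη' ha0
end

section
/- Let β_k = (c/k)Σ_{n=k}^∞ 1/√(n³ℓ(n)) with ℓ positive nondecreasing slowly varying, and Δβ_k = β_k − β_{k+1}. Then Σ_{k=n+1}^∞ (β_k + kΔβ_k) = nβ_{n+1} + 2Σ_{k=n+1}^∞ β_k, and this quantity is O(1/√(nℓ(n))) as n → ∞. -/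
open Filter Topology Finset

private lemma key_tel (m : ℕ) (hm : 1 ≤ m) :
    1 / Real.sqrt (((m+1 : ℕ):ℝ)^3) ≤ 2 * (1/Real.sqrt m - 1/Real.sqrt (m+1)) := by
  have hm1 : (1:ℝ) ≤ (m:ℝ) := by exact_mod_cast hm
  set x := Real.sqrt m with hxdef
  set y := Real.sqrt ((m:ℝ)+1) with hydef
  have hx : 1 ≤ x := by
    rw [hxdef, show (1:ℝ) = Real.sqrt 1 by simp]
    exact Real.sqrt_le_sqrt hm1
  have hx0 : 0 < x := lt_of_lt_of_le one_pos hx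
  have hxy : x ≤ y := Real.sqrt_le_sqrt (by linarith)
  have hy0 : 0 < y := lt_of_lt_of_le hx0 hxy
  have hx2 : x^2 = (m:ℝ) := Real.sq_sqrt (by linarith)
  have hy2 : y^2 = (m:ℝ)+1 := Real.sq_sqrt (by linarith)
  have hcube : Real.sqrt (((m+1 : ℕ):ℝ)^3) = y^3 := by
    push_cast
    rw [show ((m:ℝ)+1)^3 = (y^3)^2 by rw [← hy2]; ring]
    exact Real.sqrt_sq (by positivity)
  rw [hcube]
  have key : (y - x) * (y + x) = 1 := by nlinarith
  rw [div_sub_div _ _ (ne_of_gt hx0) (ne_of_gt hy0)]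
  rw [show 2 * ((1*y - x*1)/(x*y)) = (2*(y-x))/(x*y) by ring]
  rw [one_div, inv_eq_one_div, div_le_div_iff₀ (by positivity) (by positivity)]
  nlinarith [pow_pos hy0 3, mul_pos hx0 hy0, sq_nonneg (y-x),
    mul_le_mul_of_nonneg_right (mul_le_mul hxy hxy hx0.le hy0.le) hy0.le]

private lemma key_sum (k : ℕ) (hk : 1 ≤ k) (N : ℕ) :
    ∑ i ∈ range N, 1 / Real.sqrt (((k+i : ℕ):ℝ)^3) ≤ 3 / Real.sqrt k := by
  have hk0 : (0:ℝ) < Real.sqrt k := Real.sqrt_pos.mpr (by exact_mod_cast hk)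
  cases N with
  | zero => simp; positivity
  | succ M =>
    rw [Finset.sum_range_succ']
    simp only [Nat.add_zero, ← Nat.add_assoc]
    have h1 : ∑ i ∈ range M, 1 / Real.sqrt (((k+i+1 : ℕ):ℝ)^3) ≤ 2 / Real.sqrt k := by
      set g : ℕ → ℝ := fun i => 2 * (1 / Real.sqrt ((k+i : ℕ):ℝ)) with hg
      have hgi : ∀ i, 1 / Real.sqrt (((k+i+1 : ℕ):ℝ)^3) ≤ g i - g (i+1) := by
        intro i
        have h := key_tel (k+i) (le_trans hk (Nat.le_add_right _ _))
        have hc : ((k+i : ℕ):ℝ) + 1 = ((k+i+1 : ℕ):ℝ) := by push_cast; ring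
        rw [hc] at h
        simp only [hg, ← Nat.add_assoc]
        linarith
      calc ∑ i ∈ range M, 1 / Real.sqrt (((k+i+1 : ℕ):ℝ)^3)
          ≤ ∑ i ∈ range M, (g i - g (i+1)) := Finset.sum_le_sum fun i _ => hgi i
        _ = g 0 - g M := Finset.sum_range_sub' g M
        _ ≤ g 0 := by
            have : 0 ≤ g M := by simp only [hg]; positivity
            linarith
        _ = 2 / Real.sqrt k := by simp only [hg, Nat.add_zero]; ring
    have h2 : 1 / Real.sqrt (((k : ℕ):ℝ)^3) ≤ 1 / Real.sqrt k := by
      apply one_div_le_one_div_of_le hk0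
      apply Real.sqrt_le_sqrt
      have h3 : (1:ℝ) ≤ (k:ℝ) := by exact_mod_cast hk
      nlinarith [mul_nonneg (sub_nonneg.2 h3) (by positivity : (0:ℝ) ≤ (k:ℝ)),
        mul_nonneg (mul_nonneg (sub_nonneg.2 h3) (sub_nonneg.2 h3)) (by positivity : (0:ℝ) ≤ (k:ℝ))]
    have h4 : 2 / Real.sqrt k + 1 / Real.sqrt k = 3 / Real.sqrt k := by ring
    linarith

/-- With β_k = (c/k)Σ_{n=k}^∞ 1/√(n³ℓ(n)) and Δβ_k = β_k - β_{k+1},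
Σ_{k=n+1}^∞ (β_k + kΔβ_k) = nβ_{n+1} + 2Σ_{k=n+1}^∞ β_k, and this quantity is
O(1/√(nℓ(n))) as n → ∞. -/
theorem stmt14
    (ℓ : ℕ → ℝ) (hpos : ∀ n, 1 ≤ n → 0 < ℓ n) (hmono : Monotone ℓ)
    (hslow : ∀ lam : ℝ, 0 < lam →
      Tendsto (fun n : ℕ => ℓ ⌊lam * n⌋₊ / ℓ n) atTop (𝓝 1))
    (c : ℝ) (hc : 0 < c)
    (β : ℕ → ℝ)
    (hβ : ∀ k : ℕ, 1 ≤ k → β k =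
      (c / k) * ∑' n : ℕ, if k ≤ n then 1 / Real.sqrt ((n : ℝ) ^ 3 * ℓ n) else 0) :
    (∀ n : ℕ,
      (∑' i : ℕ, (β (n + 1 + i) + (n + 1 + i : ℝ) * (β (n + 1 + i) - β (n + 2 + i))))
        = n * β (n + 1) + 2 * ∑' i : ℕ, β (n + 1 + i)) ∧
    (fun n : ℕ => n * β (n + 1) + 2 * ∑' i : ℕ, β (n + 1 + i)) =O[atTop]
      (fun n : ℕ => 1 / Real.sqrt (n * ℓ n)) := by
  -- basic facts
  have hsqrt3 : ∀ m : ℕ, Real.sqrt ((m:ℝ)^3) = m * Real.sqrt m := by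
    intro m
    rw [show ((m:ℝ))^3 = ((m:ℝ))^2 * m by ring, Real.sqrt_mul (by positivity),
      Real.sqrt_sq (by positivity)]
  have hLpos : ∀ k : ℕ, 1 ≤ k → (0:ℝ) < Real.sqrt (ℓ k) :=
    fun k hk => Real.sqrt_pos.mpr (hpos k hk)
  have hLle : ∀ k m : ℕ, 1 ≤ k → k ≤ m →
      1 / Real.sqrt (ℓ m) ≤ 1 / Real.sqrt (ℓ k) := by
    intro k m hk hkm
    exact one_div_le_one_div_of_le (hLpos k hk) (Real.sqrt_le_sqrt (hmono hkm))
  have ha_nonneg : ∀ m : ℕ, (0:ℝ) ≤ 1 / Real.sqrt ((m:ℝ)^3 * ℓ m) := by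
    intro m; positivity
  have ha_le : ∀ k m : ℕ, 1 ≤ k → k ≤ m →
      1 / Real.sqrt ((m:ℝ)^3 * ℓ m) ≤ (1/Real.sqrt (ℓ k)) * (1 / Real.sqrt ((m:ℝ)^3)) := by
    intro k m hk hkm
    rw [Real.sqrt_mul (by positivity : (0:ℝ) ≤ (m:ℝ)^3)]
    rw [show (1:ℝ) / (Real.sqrt ((m:ℝ)^3) * Real.sqrt (ℓ m))
        = (1/Real.sqrt (ℓ m)) * (1/Real.sqrt ((m:ℝ)^3)) by ring]
    exact mul_le_mul_of_nonneg_right (hLle k m hk hkm) (by positivity)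
  have hfilter : ∀ k N : ℕ, Finset.filter (fun m => k ≤ m) (Finset.range N) = Finset.Ico k N := by
    intro k N; ext m; simp [Finset.mem_filter, Finset.mem_range, Finset.mem_Ico]; omega
  have hpartialS : ∀ k : ℕ, 1 ≤ k → ∀ N : ℕ,
      ∑ m ∈ range N, (if k ≤ m then 1 / Real.sqrt ((m:ℝ)^3 * ℓ m) else 0)
        ≤ (1/Real.sqrt (ℓ k)) * (3/Real.sqrt k) := by
    intro k hk N
    rw [← Finset.sum_filter, hfilter]
    calc ∑ m ∈ Finset.Ico k N, 1 / Real.sqrt ((m:ℝ)^3 * ℓ m)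
        ≤ ∑ m ∈ Finset.Ico k N, (1/Real.sqrt (ℓ k)) * (1/Real.sqrt ((m:ℝ)^3)) :=
          Finset.sum_le_sum (fun m hm => ha_le k m hk (Finset.mem_Ico.mp hm).1)
      _ = (1/Real.sqrt (ℓ k)) * ∑ m ∈ Finset.Ico k N, 1/Real.sqrt ((m:ℝ)^3) := by
          rw [Finset.mul_sum]
      _ ≤ (1/Real.sqrt (ℓ k)) * (3/Real.sqrt k) := by
          apply mul_le_mul_of_nonneg_left _ (by positivity)
          rw [Finset.sum_Ico_eq_sum_range]
          exact key_sum k hk (N - k)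
  have hite_nonneg : ∀ k m : ℕ, (0:ℝ) ≤ (if k ≤ m then 1 / Real.sqrt ((m:ℝ)^3 * ℓ m) else 0) := by
    intro k m; split
    · exact ha_nonneg m
    · exact le_refl 0
  have hSsum : ∀ k : ℕ, 1 ≤ k →
      Summable (fun m : ℕ => if k ≤ m then 1 / Real.sqrt ((m:ℝ)^3 * ℓ m) else 0) :=
    fun k hk => summable_of_sum_range_le (hite_nonneg k) (hpartialS k hk)
  have hTnonneg : ∀ k : ℕ,
      (0:ℝ) ≤ ∑' m : ℕ, (if k ≤ m then 1 / Real.sqrt ((m:ℝ)^3 * ℓ m) else 0) :=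
    fun k => tsum_nonneg (hite_nonneg k)
  have hTle : ∀ k : ℕ, 1 ≤ k →
      (∑' m : ℕ, if k ≤ m then 1 / Real.sqrt ((m:ℝ)^3 * ℓ m) else 0)
        ≤ (1/Real.sqrt (ℓ k)) * (3/Real.sqrt k) :=
    fun k hk => Summable.tsum_le_of_sum_range_le (hSsum k hk) (hpartialS k hk)
  have hTmono : ∀ k : ℕ, 1 ≤ k →
      (∑' m : ℕ, if k+1 ≤ m then 1 / Real.sqrt ((m:ℝ)^3 * ℓ m) else 0)
        ≤ ∑' m : ℕ, (if k ≤ m then 1 / Real.sqrt ((m:ℝ)^3 * ℓ m) else 0) := by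
    intro k hk
    apply Summable.tsum_le_tsum _ (hSsum (k+1) (by omega)) (hSsum k hk)
    intro m
    by_cases h1 : k+1 ≤ m
    · rw [if_pos h1, if_pos (by omega)]
    · rw [if_neg h1]; exact hite_nonneg k m
  have hβnonneg : ∀ k : ℕ, 1 ≤ k → 0 ≤ β k := by
    intro k hk
    rw [hβ k hk]
    have hk0 : (0:ℝ) < k := by exact_mod_cast hk
    exact mul_nonneg (by positivity) (hTnonneg k)
  have hβle : ∀ k : ℕ, 1 ≤ k →
      β k ≤ 3*c*(1/Real.sqrt (ℓ k))*(1/Real.sqrt ((k:ℝ)^3)) := by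
    intro k hk
    rw [hβ k hk]
    have hk0 : (0:ℝ) < k := by exact_mod_cast hk
    calc (c/k) * (∑' m : ℕ, if k ≤ m then 1 / Real.sqrt ((m:ℝ)^3 * ℓ m) else 0)
        ≤ (c/k) * ((1/Real.sqrt (ℓ k)) * (3/Real.sqrt k)) :=
          mul_le_mul_of_nonneg_left (hTle k hk) (by positivity)
      _ = 3*c*(1/Real.sqrt (ℓ k))*(1/((k:ℝ) * Real.sqrt k)) := by ring
      _ = 3*c*(1/Real.sqrt (ℓ k))*(1/Real.sqrt ((k:ℝ)^3)) := by rw [hsqrt3 k]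
  have hβmono : ∀ k : ℕ, 1 ≤ k → β (k+1) ≤ β k := by
    intro k hk
    rw [hβ k hk, hβ (k+1) (by omega)]
    have hk0 : (0:ℝ) < k := by exact_mod_cast hk
    have hdiv : c/((k+1 : ℕ):ℝ) ≤ c/(k:ℝ) := by
      apply div_le_div_of_nonneg_left hc.le hk0
      push_cast; linarith
    exact mul_le_mul hdiv (hTmono k hk) (hTnonneg (k+1)) (by positivity)
  have hβtail : ∀ m : ℕ, 1 ≤ m → ∀ N : ℕ,
      ∑ i ∈ range N, β (m+i) ≤ 3*c*(1/Real.sqrt (ℓ m))*(3/Real.sqrt m) := by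
    intro m hm N
    calc ∑ i ∈ range N, β (m+i)
        ≤ ∑ i ∈ range N, 3*c*(1/Real.sqrt (ℓ m))*(1/Real.sqrt (((m+i : ℕ):ℝ)^3)) := by
          apply Finset.sum_le_sum
          intro i _
          calc β (m+i) ≤ 3*c*(1/Real.sqrt (ℓ (m+i)))*(1/Real.sqrt (((m+i : ℕ):ℝ)^3)) :=
                hβle (m+i) (by omega)
            _ ≤ 3*c*(1/Real.sqrt (ℓ m))*(1/Real.sqrt (((m+i : ℕ):ℝ)^3)) := by
                apply mul_le_mul_of_nonneg_right _ (by positivity)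
                apply mul_le_mul_of_nonneg_left (hLle m (m+i) hm (by omega)) (by positivity)
      _ = 3*c*(1/Real.sqrt (ℓ m)) * ∑ i ∈ range N, 1/Real.sqrt (((m+i : ℕ):ℝ)^3) := by
          rw [Finset.mul_sum]
      _ ≤ 3*c*(1/Real.sqrt (ℓ m)) * (3/Real.sqrt m) := by
          apply mul_le_mul_of_nonneg_left (key_sum m hm N) (by positivity)
      _ = 3*c*(1/Real.sqrt (ℓ m))*(3/Real.sqrt m) := by ring
  have hβtailsum : ∀ m : ℕ, 1 ≤ m → Summable (fun i : ℕ => β (m+i)) :=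
    fun m hm => summable_of_sum_range_le (fun i => hβnonneg (m+i) (by omega)) (hβtail m hm)
  have hβtailtsum : ∀ m : ℕ, 1 ≤ m →
      (∑' i : ℕ, β (m+i)) ≤ 3*c*(1/Real.sqrt (ℓ m))*(3/Real.sqrt m) :=
    fun m hm => Summable.tsum_le_of_sum_range_le (hβtailsum m hm) (hβtail m hm)
  constructor
  · -- Part 1: the Abel summation identity
    intro n
    have hBsum : Summable (fun i : ℕ => β (n+1+i)) := hβtailsum (n+1) (by omega)
    set B := ∑' i : ℕ, β (n+1+i) with hB
    set w : ℕ → ℝ := fun i => ((n:ℝ)+i) * β (n+1+i) with hw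
    have hteq : ∀ i : ℕ,
        β (n+1+i) + ((n:ℝ)+1+(i:ℝ)) * (β (n+1+i) - β (n+2+i))
          = (w i - w (i+1)) + 2*β (n+1+i) := by
      intro i
      simp only [hw]
      rw [show n+1+(i+1) = n+2+i from by omega]
      push_cast
      ring
    have hts : ∀ N : ℕ,
        ∑ i ∈ range N, (β (n+1+i) + ((n:ℝ)+1+(i:ℝ)) * (β (n+1+i) - β (n+2+i)))
          = (w 0 - w N) + 2 * ∑ i ∈ range N, β (n+1+i) := by
      intro N
      rw [Finset.mul_sum, ← Finset.sum_range_sub' w N, ← Finset.sum_add_distrib]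
      exact Finset.sum_congr rfl (fun i _ => hteq i)
    have ht_nonneg : ∀ i : ℕ,
        0 ≤ β (n+1+i) + ((n:ℝ)+1+(i:ℝ)) * (β (n+1+i) - β (n+2+i)) := by
      intro i
      have h1 := hβnonneg (n+1+i) (by omega)
      have h2 : β (n+2+i) ≤ β (n+1+i) := by
        have h := hβmono (n+1+i) (by omega)
        rwa [show n+1+i+1 = n+2+i from by omega] at h
      have h3 : (0:ℝ) ≤ (n:ℝ)+1+(i:ℝ) := by positivity
      nlinarith
    have hw_nonneg : ∀ N : ℕ, 0 ≤ w N := by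
      intro N
      exact mul_nonneg (by positivity) (hβnonneg _ (by omega))
    have hpsum_le : ∀ N : ℕ, ∑ i ∈ range N, β (n+1+i) ≤ B :=
      fun N => Summable.sum_le_tsum (range N) (fun i _ => hβnonneg _ (by omega)) hBsum
    have ht_sum : Summable
        (fun i : ℕ => β (n+1+i) + ((n:ℝ)+1+(i:ℝ)) * (β (n+1+i) - β (n+2+i))) := by
      apply summable_of_sum_range_le ht_nonneg (c := w 0 + 2*B)
      intro N
      rw [hts N]
      have := hw_nonneg N
      have := hpsum_le N
      linarith
    have hwlim : Tendsto w atTop (𝓝 0) := by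
      apply squeeze_zero hw_nonneg
        (g := fun N => 3*c*(1/Real.sqrt (ℓ 1)) * (1/Real.sqrt ((n+1+N : ℕ):ℝ)))
      · intro N
        have hm : 1 ≤ n+1+N := by omega
        have hb := hβle (n+1+N) hm
        have hcast : ((n:ℝ)+(N:ℝ)) ≤ ((n+1+N : ℕ):ℝ) := by push_cast; linarith
        have hmpos : (0:ℝ) < ((n+1+N : ℕ):ℝ) := by exact_mod_cast hm
        calc w N = ((n:ℝ)+(N:ℝ)) * β (n+1+N) := rfl
          _ ≤ ((n+1+N : ℕ):ℝ) * β (n+1+N) :=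
              mul_le_mul_of_nonneg_right hcast (hβnonneg _ hm)
          _ ≤ ((n+1+N : ℕ):ℝ) * (3*c*(1/Real.sqrt (ℓ (n+1+N)))*(1/Real.sqrt (((n+1+N : ℕ):ℝ)^3))) :=
              mul_le_mul_of_nonneg_left hb hmpos.le
          _ ≤ ((n+1+N : ℕ):ℝ) * (3*c*(1/Real.sqrt (ℓ 1))*(1/Real.sqrt (((n+1+N : ℕ):ℝ)^3))) := by
              apply mul_le_mul_of_nonneg_left _ hmpos.le
              apply mul_le_mul_of_nonneg_right _ (by positivity)
              exact mul_le_mul_of_nonneg_left (hLle 1 (n+1+N) le_rfl hm) (by positivity)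
          _ = 3*c*(1/Real.sqrt (ℓ 1)) * (((n+1+N : ℕ):ℝ) * (1/(((n+1+N : ℕ):ℝ)*Real.sqrt ((n+1+N : ℕ):ℝ)))) := by
              rw [hsqrt3 (n+1+N)]; ring
          _ = 3*c*(1/Real.sqrt (ℓ 1)) * (1/Real.sqrt ((n+1+N : ℕ):ℝ)) := by
              congr 1
              rw [one_div, mul_inv, ← mul_assoc, mul_inv_cancel₀ (ne_of_gt hmpos), one_mul, one_div]
      · have hsqrtT : Tendsto Real.sqrt atTop atTop := by
          refine tendsto_atTop_atTop.mpr fun b => ⟨max 0 (b^2), fun a ha => ?_⟩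
          rcases le_or_gt b 0 with hb | hb
          · exact hb.trans (Real.sqrt_nonneg a)
          · have h1 : b^2 ≤ a := le_trans (le_max_right _ _) ha
            have h2 := Real.sqrt_le_sqrt h1
            rwa [Real.sqrt_sq hb.le] at h2
        have h1 : Tendsto (fun N : ℕ => ((n+1+N : ℕ):ℝ)) atTop atTop := by
          have h0 : Tendsto (fun N : ℕ => n+1+N) atTop atTop :=
            tendsto_atTop_mono (fun N => Nat.le_add_left N (n+1)) tendsto_id
          exact tendsto_natCast_atTop_atTop.comp h0
        have h2 : Tendsto (fun N : ℕ => Real.sqrt ((n+1+N : ℕ):ℝ)) atTop atTop :=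
          hsqrtT.comp h1
        have h3 : Tendsto (fun N : ℕ => 1/Real.sqrt ((n+1+N : ℕ):ℝ)) atTop (𝓝 0) := by
          simp only [one_div]
          exact h2.inv_tendsto_atTop
        have := h3.const_mul (3*c*(1/Real.sqrt (ℓ 1)))
        simpa using this
    have hslim : Tendsto (fun N => ∑ i ∈ range N, β (n+1+i)) atTop (𝓝 B) :=
      hBsum.hasSum.tendsto_sum_nat
    have hlim : Tendsto
        (fun N => ∑ i ∈ range N, (β (n+1+i) + ((n:ℝ)+1+(i:ℝ)) * (β (n+1+i) - β (n+2+i))))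
        atTop (𝓝 ((n:ℝ) * β (n+1) + 2*B)) := by
      have hw0 : w 0 = (n:ℝ) * β (n+1) := by simp [hw]
      have hh : Tendsto (fun N => (w 0 - w N) + 2 * ∑ i ∈ range N, β (n+1+i))
          atTop (𝓝 ((w 0 - 0) + 2*B)) :=
        (tendsto_const_nhds.sub hwlim).add (hslim.const_mul 2)
      rw [sub_zero] at hh
      rw [← hw0]
      exact Tendsto.congr (fun N => (hts N).symm) hh
    exact tendsto_nhds_unique (ht_sum.hasSum_iff_tendsto_nat.mp ht_sum.hasSum) hlim
  · -- Part 2: big-O bound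
    rw [Asymptotics.isBigO_iff]
    refine ⟨21*c, ?_⟩
    filter_upwards [eventually_ge_atTop 1] with n hn
    have hn0 : (0:ℝ) < (n:ℝ) := by exact_mod_cast hn
    have hsn : (0:ℝ) < Real.sqrt n := Real.sqrt_pos.mpr hn0
    have hLn := hLpos n hn
    have hBsum : Summable (fun i : ℕ => β (n+1+i)) := hβtailsum (n+1) (by omega)
    have hBnonneg : 0 ≤ ∑' i : ℕ, β (n+1+i) :=
      tsum_nonneg (fun i => hβnonneg _ (by omega))
    have hβn1 : 0 ≤ β (n+1) := hβnonneg (n+1) (by omega)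
    -- bound on n * β (n+1)
    have hbd1 : (n:ℝ) * β (n+1) ≤ 3*c*(1/Real.sqrt (ℓ n))*(1/Real.sqrt n) := by
      have hb := hβle (n+1) (by omega)
      have hb' : β (n+1) ≤ 3*c*(1/Real.sqrt (ℓ n))*(1/Real.sqrt (((n+1 : ℕ):ℝ)^3)) := by
        refine le_trans hb ?_
        apply mul_le_mul_of_nonneg_right _ (by positivity)
        exact mul_le_mul_of_nonneg_left (hLle n (n+1) hn (by omega)) (by positivity)
      calc (n:ℝ) * β (n+1) ≤ (n:ℝ) * (3*c*(1/Real.sqrt (ℓ n))*(1/Real.sqrt (((n+1 : ℕ):ℝ)^3))) :=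
            mul_le_mul_of_nonneg_left hb' hn0.le
        _ = 3*c*(1/Real.sqrt (ℓ n))*((n:ℝ)/Real.sqrt (((n+1 : ℕ):ℝ)^3)) := by ring
        _ ≤ 3*c*(1/Real.sqrt (ℓ n))*(1/Real.sqrt n) := by
            apply mul_le_mul_of_nonneg_left _ (by positivity)
            rw [div_le_div_iff₀ (by rw [hsqrt3]; positivity) hsn, hsqrt3]
            have hsle : Real.sqrt n ≤ Real.sqrt ((n+1 : ℕ):ℝ) := by
              apply Real.sqrt_le_sqrt; push_cast; linarith
            have hnle : (n:ℝ) ≤ ((n+1 : ℕ):ℝ) := by push_cast; linarith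
            calc (n:ℝ) * Real.sqrt n ≤ ((n+1 : ℕ):ℝ) * Real.sqrt ((n+1 : ℕ):ℝ) :=
                  mul_le_mul hnle hsle hsn.le (by positivity)
              _ = 1 * (((n+1 : ℕ):ℝ) * Real.sqrt ((n+1 : ℕ):ℝ)) := by ring
    -- bound on the tail sum
    have hbd2 : (∑' i : ℕ, β (n+1+i)) ≤ 9*c*(1/Real.sqrt (ℓ n))*(1/Real.sqrt n) := by
      have h := hβtailtsum (n+1) (by omega)
      refine le_trans h ?_
      have h1 : (1:ℝ)/Real.sqrt (ℓ (n+1)) ≤ 1/Real.sqrt (ℓ n) := hLle n (n+1) hn (by omega)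
      have h2 : (3:ℝ)/Real.sqrt ((n+1 : ℕ):ℝ) ≤ 3/Real.sqrt n := by
        apply div_le_div_of_nonneg_left (by norm_num) hsn
        apply Real.sqrt_le_sqrt; push_cast; linarith
      calc 3*c*(1/Real.sqrt (ℓ (n+1)))*(3/Real.sqrt ((n+1 : ℕ):ℝ))
          ≤ 3*c*(1/Real.sqrt (ℓ n))*(3/Real.sqrt ((n+1 : ℕ):ℝ)) := by
            apply mul_le_mul_of_nonneg_right _ (by positivity)
            exact mul_le_mul_of_nonneg_left h1 (by positivity)
        _ ≤ 3*c*(1/Real.sqrt (ℓ n))*(3/Real.sqrt n) :=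
            mul_le_mul_of_nonneg_left h2 (by positivity)
        _ = 9*c*(1/Real.sqrt (ℓ n))*(1/Real.sqrt n) := by ring
    have hrhs : Real.sqrt ((n:ℝ) * ℓ n) = Real.sqrt n * Real.sqrt (ℓ n) :=
      Real.sqrt_mul hn0.le _
    rw [Real.norm_eq_abs, Real.norm_eq_abs,
      abs_of_nonneg (by positivity : (0:ℝ) ≤ 1 / Real.sqrt ((n:ℝ) * ℓ n)),
      abs_of_nonneg (by positivity)]
    have : 21*c * (1/Real.sqrt ((n:ℝ) * ℓ n))
        = 21*c*(1/Real.sqrt (ℓ n))*(1/Real.sqrt n) := by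
      rw [hrhs]; ring
    rw [this]
    linarith
end

section
/- Suppose a_n = O(1/(n L(n))) for a positive, nondecreasing, slowly varying L, and set s_{j,n} = a_{j+1} + ⋯ + a_{j+n}. Then Σ_{j=0}^∞ s_{j,n}² = O(n / L(n)²) as n → ∞; consequently, for the linear process above, ‖E[S_n | ℱ₀]‖ = O(√n / L(n)). -/
open Filter Topology

lemma aux_sum_rpow (p : ℝ) (hp : 0 < p) (hp1 : p ≤ 1) (m : ℕ) :
    ∑ i ∈ Finset.Icc 1 m, (i:ℝ) ^ (p - 1) ≤ (m:ℝ) ^ p / p := by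
  induction m with
  | zero => simp [Real.zero_rpow hp.ne']
  | succ m ih =>
    rw [Finset.sum_Icc_succ_top (Nat.succ_le_succ (Nat.zero_le m))]
    have hx : (1:ℝ) ≤ (m:ℝ) + 1 := by have := Nat.cast_nonneg (α := ℝ) m; linarith
    have hx0 : (0:ℝ) < (m:ℝ) + 1 := by positivity
    -- Bernoulli: (1 - 1/x)^p ≤ 1 - p/x
    have hber : (1 - 1/((m:ℝ)+1)) ^ p ≤ 1 - p * (1/((m:ℝ)+1)) := by
      have := rpow_one_add_le_one_add_mul_self (s := -(1/((m:ℝ)+1)))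
        (by rw [neg_le_neg_iff]; exact (div_le_one hx0).mpr hx) hp.le hp1
      simpa [sub_eq_add_neg, mul_neg] using this
    have hmm : (m:ℝ) = ((m:ℝ)+1) * (1 - 1/((m:ℝ)+1)) := by field_simp; ring
    have key : (m:ℝ) ^ p + p * ((m:ℝ)+1) ^ (p - 1) ≤ ((m:ℝ)+1) ^ p := by
      have h1 : (m:ℝ) ^ p = ((m:ℝ)+1) ^ p * (1 - 1/((m:ℝ)+1)) ^ p := by
        conv_lhs => rw [hmm]
        rw [Real.mul_rpow hx0.le (by rw [sub_nonneg]; exact (div_le_one hx0).mpr hx)]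
      have h2 : ((m:ℝ)+1) ^ p * (1 - 1/((m:ℝ)+1)) ^ p
          ≤ ((m:ℝ)+1) ^ p * (1 - p * (1/((m:ℝ)+1))) :=
        mul_le_mul_of_nonneg_left hber (Real.rpow_nonneg hx0.le p)
      have h3 : ((m:ℝ)+1) ^ (p - 1) = ((m:ℝ)+1) ^ p / ((m:ℝ)+1) :=
        Real.rpow_sub_one hx0.ne' p
      rw [h1, h3]
      have : ((m:ℝ)+1) ^ p * (1 - p * (1/((m:ℝ)+1)))
          = ((m:ℝ)+1) ^ p - p * (((m:ℝ)+1) ^ p / ((m:ℝ)+1)) := by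
        field_simp
      linarith [h2, this.le, this.ge]
    have hcast : ((m+1 : ℕ):ℝ) = (m:ℝ) + 1 := by push_cast; ring
    rw [hcast]
    have goal2 : ∑ k ∈ Finset.Icc 1 m, (k:ℝ) ^ (p-1) + ((m:ℝ)+1) ^ (p-1)
        ≤ ((m:ℝ)+1) ^ p / p := by
      have h4 : ((m:ℝ)+1) ^ (p-1) = (p * ((m:ℝ)+1) ^ (p-1)) / p := by
        field_simp
      have h5 : (m:ℝ) ^ p / p + (p * ((m:ℝ)+1) ^ (p-1)) / p ≤ ((m:ℝ)+1) ^ p / p := by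
        rw [← add_div, div_le_div_iff_of_pos_right hp]  -- name guess
        exact key
      calc ∑ k ∈ Finset.Icc 1 m, (k:ℝ) ^ (p-1) + ((m:ℝ)+1) ^ (p-1)
          ≤ (m:ℝ) ^ p / p + ((m:ℝ)+1) ^ (p-1) := by linarith
        _ ≤ ((m:ℝ)+1) ^ p / p := by rw [h4]; exact h5
    simpa using goal2

lemma aux_sum_inv_sq (n : ℕ) (hn : 1 ≤ n) (M : ℕ) :
    ∑ j ∈ Finset.Icc (n+1) M, ((j:ℝ)^2)⁻¹ ≤ ((n:ℝ))⁻¹ := by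
  rcases le_or_gt M n with h | h
  · rw [Finset.Icc_eq_empty (by omega)]
    positivity
  · have key : ∀ M', n ≤ M' → ∑ j ∈ Finset.Icc (n+1) M', ((j:ℝ)^2)⁻¹
        ≤ ((n:ℝ))⁻¹ - ((M':ℝ))⁻¹ := by
      intro M' hM'
      induction M', hM' using Nat.le_induction with
      | base => rw [Finset.Icc_eq_empty (by omega)]; simp
      | succ M' hM' ih =>
        rw [Finset.sum_Icc_succ_top (by omega)]
        have hM0 : (0:ℝ) < (M':ℝ) := by
          have : 1 ≤ M' := le_trans hn hM'
          exact_mod_cast Nat.lt_of_lt_of_le Nat.zero_lt_one this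
        have hM1 : (0:ℝ) < (M':ℝ) + 1 := by linarith
        have hstep : (((M'+1:ℕ):ℝ)^2)⁻¹ ≤ ((M':ℝ))⁻¹ - (((M'+1:ℕ):ℝ))⁻¹ := by
          push_cast
          rw [show ((M':ℝ))⁻¹ - ((M':ℝ)+1)⁻¹ = ((M':ℝ) * ((M':ℝ)+1))⁻¹ by
            field_simp; ring]
          apply inv_anti₀ (by positivity)
          nlinarith
        push_cast at hstep ⊢
        linarith
    have h2 := key M (le_of_lt h)
    have : (0:ℝ) < (M:ℝ) := by exact_mod_cast Nat.lt_of_le_of_lt (Nat.zero_le n) h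
    have := inv_nonneg.mpr this.le
    linarith


lemma aux_potter_s16 (L : ℕ → ℝ) (hpos : ∀ n, 1 ≤ n → 0 < L n) (hmono : Monotone L)
    (hslow : ∀ lam : ℝ, 0 < lam →
      Tendsto (fun n : ℕ => L ⌊lam * n⌋₊ / L n) atTop (𝓝 1)) :
    ∃ D : ℝ, 1 ≤ D ∧ ∀ j m : ℕ, 1 ≤ j → j ≤ m →
      L m ≤ D * ((m:ℝ)/(j:ℝ)) ^ (4⁻¹:ℝ) * L j := by
  set α : ℝ := (2:ℝ) ^ (4⁻¹:ℝ) with hαdef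
  have hα0 : 0 < α := Real.rpow_pos_of_pos two_pos _
  have hα1 : 1 < α := Real.one_lt_rpow_iff_of_pos two_pos |>.mpr (Or.inl ⟨one_lt_two, by norm_num⟩)
  have hα2 : α ≤ 2 := by
    calc α ≤ (2:ℝ) ^ (1:ℝ) := Real.rpow_le_rpow_of_exponent_le one_le_two (by norm_num)
    _ = 2 := Real.rpow_one 2
  have hfl : ∀ n : ℕ, ⌊(2:ℝ) * (n:ℝ)⌋₊ = 2 * n := by
    intro n
    rw [show (2:ℝ)*(n:ℝ) = ((2*n : ℕ):ℝ) by push_cast; ring, Nat.floor_natCast]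
  have h2 := hslow 2 two_pos
  simp only [hfl] at h2
  have hev : ∀ᶠ n : ℕ in atTop, L (2*n) / L n < α := h2.eventually_lt_const hα1
  obtain ⟨N₀, hN₀⟩ := eventually_atTop.mp hev
  set N₁ := max N₀ 1 with hN₁def
  have hN₁1 : 1 ≤ N₁ := le_max_right _ _
  have hstep : ∀ n, N₁ ≤ n → L (2*n) ≤ α * L n := by
    intro n hn
    have h1n : 1 ≤ n := le_trans hN₁1 hn
    have := hN₀ n (le_trans (le_max_left _ _) hn)
    exact le_of_lt ((div_lt_iff₀ (hpos n h1n)).mp this)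
  have claim1 : ∀ k n, N₁ ≤ n → L (2^k * n) ≤ α^k * L n := by
    intro k
    induction k with
    | zero => intro n _; simp
    | succ k ih =>
      intro n hn
      have h2n : N₁ ≤ 2*n := le_trans hn (by omega)
      have := ih (2*n) h2n
      calc L (2^(k+1) * n) = L (2^k * (2*n)) := by ring_nf
        _ ≤ α^k * L (2*n) := this
        _ ≤ α^k * (α * L n) := by
            exact mul_le_mul_of_nonneg_left (hstep n hn) (pow_nonneg hα0.le k)
        _ = α^(k+1) * L n := by ring
  have claim2 : ∀ j m : ℕ, N₁ ≤ j → j ≤ m →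
      L m ≤ 2 * ((m:ℝ)/(j:ℝ)) ^ (4⁻¹:ℝ) * L j := by
    intro j m hj hjm
    have hj1 : 1 ≤ j := le_trans hN₁1 hj
    have hj0 : (0:ℝ) < (j:ℝ) := by exact_mod_cast hj1
    have hLj : 0 < L j := hpos j hj1
    have hratio1 : (1:ℝ) ≤ (m:ℝ)/(j:ℝ) := by
      rw [le_div_iff₀ hj0]; exact_mod_cast by simpa using hjm
    have hrp1 : (1:ℝ) ≤ ((m:ℝ)/(j:ℝ)) ^ (4⁻¹:ℝ) :=
      Real.one_le_rpow hratio1 (by norm_num)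
    have hex : ∃ k, m ≤ 2^k * j :=
      ⟨m, le_trans (Nat.le_of_lt (Nat.lt_two_pow_self (n := m))) (Nat.le_mul_of_pos_right _ hj1)⟩
    set k := Nat.find hex with hkdef
    have hk : m ≤ 2^k * j := Nat.find_spec hex
    have hLm : L m ≤ α^k * L j := le_trans (hmono hk) (claim1 k j hj)
    rcases Nat.eq_zero_or_pos k with hk0 | hkpos
    · rw [hk0] at hLm
      simp only [pow_zero, one_mul] at hLm
      calc L m ≤ L j := hLm
        _ ≤ 2 * ((m:ℝ)/(j:ℝ)) ^ (4⁻¹:ℝ) * L j := by nlinarith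
    · have hkm : ¬ (m ≤ 2^(k-1) * j) := Nat.find_min hex (by omega)
      push_neg at hkm
      -- (2^(k-1) : ℝ) < m / j
      have hlt : ((2:ℝ)^(k-1)) ≤ (m:ℝ)/(j:ℝ) := by
        rw [le_div_iff₀ hj0]
        exact_mod_cast Nat.le_of_lt hkm
      have hαk : α^k ≤ 2 * ((m:ℝ)/(j:ℝ)) ^ (4⁻¹:ℝ) := by
        have e1 : α^k = ((2:ℝ)^k) ^ (4⁻¹:ℝ) := by
          rw [hαdef, ← Real.rpow_natCast ((2:ℝ) ^ (4⁻¹:ℝ)) k,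
            ← Real.rpow_natCast (2:ℝ) k, ← Real.rpow_mul (by norm_num),
            ← Real.rpow_mul (by norm_num)]
          ring_nf
        have e2 : ((2:ℝ)^k) = 2 * (2:ℝ)^(k-1) := by
          rw [← pow_succ']
          congr 1
          omega
        rw [e1, e2, Real.mul_rpow (by norm_num) (by positivity)]
        have h3 : ((2:ℝ)^(k-1)) ^ (4⁻¹:ℝ) ≤ ((m:ℝ)/(j:ℝ)) ^ (4⁻¹:ℝ) :=
          Real.rpow_le_rpow (by positivity) hlt (by norm_num)
        have h4 : (2:ℝ) ^ (4⁻¹:ℝ) ≤ 2 := hα2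
        nlinarith [Real.rpow_nonneg (show (0:ℝ) ≤ (2:ℝ)^(k-1) by positivity) (4⁻¹:ℝ)]
      calc L m ≤ α^k * L j := hLm
        _ ≤ 2 * ((m:ℝ)/(j:ℝ)) ^ (4⁻¹:ℝ) * L j :=
          mul_le_mul_of_nonneg_right hαk hLj.le
  -- global constant
  have hL1 : 0 < L 1 := hpos 1 le_rfl
  have hLN : 0 < L N₁ := hpos N₁ hN₁1
  have hLN1 : L 1 ≤ L N₁ := hmono hN₁1
  refine ⟨2 * (L N₁ / L 1), ?_, ?_⟩
  · have : 1 ≤ L N₁ / L 1 := (one_le_div hL1).mpr hLN1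
    linarith
  intro j m hj1 hjm
  have hj0 : (0:ℝ) < (j:ℝ) := by exact_mod_cast hj1
  have hLj : 0 < L j := hpos j hj1
  have hL1j : L 1 ≤ L j := hmono hj1
  have hratio1 : (1:ℝ) ≤ (m:ℝ)/(j:ℝ) := by
    rw [le_div_iff₀ hj0]; exact_mod_cast by simpa using hjm
  have hrp1 : (1:ℝ) ≤ ((m:ℝ)/(j:ℝ)) ^ (4⁻¹:ℝ) := Real.one_le_rpow hratio1 (by norm_num)
  have hQ : 1 ≤ L N₁ / L 1 := (one_le_div hL1).mpr hLN1
  rcases le_or_gt N₁ j with hNj | hjN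
  · have := claim2 j m hNj hjm
    calc L m ≤ 2 * ((m:ℝ)/(j:ℝ)) ^ (4⁻¹:ℝ) * L j := this
      _ ≤ 2 * (L N₁ / L 1) * ((m:ℝ)/(j:ℝ)) ^ (4⁻¹:ℝ) * L j := by
          nlinarith [mul_nonneg (sub_nonneg.mpr hQ) (mul_nonneg (le_trans zero_le_one hrp1) hLj.le)]
  · rcases le_or_gt N₁ m with hNm | hmN
    · have h1 := claim2 N₁ m le_rfl hNm
      have hNr : ((m:ℝ)/(N₁:ℝ)) ^ (4⁻¹:ℝ) ≤ ((m:ℝ)/(j:ℝ)) ^ (4⁻¹:ℝ) := by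
        apply Real.rpow_le_rpow (by positivity) _ (by norm_num)
        apply div_le_div_of_nonneg_left (Nat.cast_nonneg m) hj0
        exact_mod_cast hjN.le
      have hLNj : L N₁ ≤ (L N₁ / L 1) * L j := by
        rw [div_mul_eq_mul_div, le_div_iff₀ hL1]
        exact mul_le_mul_of_nonneg_left hL1j hLN.le
      have hN0 : (0:ℝ) < (N₁:ℝ) := by exact_mod_cast hN₁1
      calc L m ≤ 2 * ((m:ℝ)/(N₁:ℝ)) ^ (4⁻¹:ℝ) * L N₁ := h1
        _ ≤ 2 * ((m:ℝ)/(j:ℝ)) ^ (4⁻¹:ℝ) * ((L N₁ / L 1) * L j) := by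
            apply mul_le_mul _ hLNj hLN.le (by positivity)
            exact mul_le_mul_of_nonneg_left hNr (by norm_num)
        _ = 2 * (L N₁ / L 1) * ((m:ℝ)/(j:ℝ)) ^ (4⁻¹:ℝ) * L j := by ring
    · have h1 : L m ≤ L N₁ := hmono hmN.le
      have hLNj : L N₁ ≤ (L N₁ / L 1) * L j := by
        rw [div_mul_eq_mul_div, le_div_iff₀ hL1]
        exact mul_le_mul_of_nonneg_left hL1j hLN.le
      calc L m ≤ (L N₁ / L 1) * L j := le_trans h1 hLNj
        _ ≤ 2 * (L N₁ / L 1) * ((m:ℝ)/(j:ℝ)) ^ (4⁻¹:ℝ) * L j := by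
          nlinarith [mul_nonneg (sub_nonneg.mpr hQ) (mul_nonneg (le_trans zero_le_one hrp1) hLj.le)]


set_option maxHeartbeats 2000000 in
/-- If a_n = O(1/(n L(n))) with L positive, nondecreasing and
slowly varying, and s_{j,n} = a_{j+1} + ⋯ + a_{j+n}, then
Σ_{j=0}^∞ s_{j,n}² = O(n / L(n)²); consequently, for the linear process,
‖E[S_n | ℱ₀]‖ = √(Σ_j s_{j,n}²) = O(√n / L(n)). -/
theorem stmt16
    (L : ℕ → ℝ) (hpos : ∀ n, 1 ≤ n → 0 < L n) (hmono : Monotone L)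
    (hslow : ∀ lam : ℝ, 0 < lam →
      Tendsto (fun n : ℕ => L ⌊lam * n⌋₊ / L n) atTop (𝓝 1))
    (a : ℕ → ℝ)
    (ha : (fun n : ℕ => a n) =O[atTop] fun n : ℕ => 1 / ((n : ℝ) * L n))
    (s : ℕ → ℕ → ℝ)
    (hs : ∀ j n, s j n = ∑ i ∈ Finset.Icc (j + 1) (j + n), a i) :
    ((fun n : ℕ => ∑' j : ℕ, s j n ^ 2) =O[atTop]
      fun n : ℕ => (n : ℝ) / L n ^ 2) ∧
    ((fun n : ℕ => Real.sqrt (∑' j : ℕ, s j n ^ 2)) =O[atTop]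
      fun n : ℕ => Real.sqrt n / L n) := by
  obtain ⟨D, hD1, hD⟩ := aux_potter_s16 L hpos hmono hslow
  have hD0 : 0 < D := lt_of_lt_of_le one_pos hD1
  -- a uniform constant C with |a i| ≤ C / (i * L i) for all i ≥ 1
  obtain ⟨c, hc⟩ := Asymptotics.isBigO_iff.mp ha
  obtain ⟨N₀, hN₀⟩ := eventually_atTop.mp hc
  set C : ℝ := max c 1 + ∑ i ∈ Finset.Icc 1 N₀, |a i| * ((i:ℝ) * L i) with hCdef
  have hterm : ∀ i ∈ Finset.Icc 1 N₀, 0 ≤ |a i| * ((i:ℝ) * L i) := by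
    intro i hi
    obtain ⟨hi1, _⟩ := Finset.mem_Icc.mp hi
    have : (0:ℝ) < (i:ℝ) * L i := by
      have := hpos i hi1
      have hi0 : (0:ℝ) < (i:ℝ) := by exact_mod_cast hi1
      positivity
    positivity
  have hC1 : 1 ≤ C := by
    have h1 : (1:ℝ) ≤ max c 1 := le_max_right _ _
    have h2 : 0 ≤ ∑ i ∈ Finset.Icc 1 N₀, |a i| * ((i:ℝ) * L i) :=
      Finset.sum_nonneg hterm
    linarith
  have hC0 : 0 < C := lt_of_lt_of_le one_pos hC1
  have hCa : ∀ i : ℕ, 1 ≤ i → |a i| ≤ C / ((i:ℝ) * L i) := by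
    intro i hi1
    have hLi := hpos i hi1
    have hi0 : (0:ℝ) < (i:ℝ) := by exact_mod_cast hi1
    have hiL : (0:ℝ) < (i:ℝ) * L i := by positivity
    rcases le_or_gt N₀ i with hN | hN
    · have := hN₀ i hN
      rw [Real.norm_eq_abs, Real.norm_eq_abs] at this
      have habs : |1 / ((i:ℝ) * L i)| = 1 / ((i:ℝ) * L i) := abs_of_pos (by positivity)
      rw [habs] at this
      calc |a i| ≤ c * (1 / ((i:ℝ) * L i)) := this
        _ ≤ C * (1 / ((i:ℝ) * L i)) := by
            apply mul_le_mul_of_nonneg_right _ (by positivity)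
            calc c ≤ max c 1 := le_max_left _ _
              _ ≤ C := by
                  have := Finset.sum_nonneg hterm
                  rw [hCdef]; linarith
        _ = C / ((i:ℝ) * L i) := by ring
    · have hmem : i ∈ Finset.Icc 1 N₀ := Finset.mem_Icc.mpr ⟨hi1, hN.le⟩
      have hsingle : |a i| * ((i:ℝ) * L i) ≤ ∑ k ∈ Finset.Icc 1 N₀, |a k| * ((k:ℝ) * L k) :=
        Finset.single_le_sum hterm hmem
      have : |a i| * ((i:ℝ) * L i) ≤ C := by
        have h1 : (0:ℝ) ≤ max c 1 := le_trans zero_le_one (le_max_right _ _)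
        rw [hCdef]; linarith
      rwa [le_div_iff₀ hiL]
  -- pointwise bound on |s j n|
  have hsabs : ∀ j n t : ℕ, 1 ≤ t → t ≤ j + 1 →
      |s j n| ≤ (C / L t) * ∑ i ∈ Finset.Icc (j+1) (j+n), ((i:ℝ))⁻¹ := by
    intro j n t ht htj
    rw [hs]
    refine (Finset.abs_sum_le_sum_abs _ _).trans ?_
    rw [Finset.mul_sum]
    apply Finset.sum_le_sum
    intro i hi
    obtain ⟨hi1', hi2⟩ := Finset.mem_Icc.mp hi
    have hti : t ≤ i := le_trans htj hi1'
    have h1i : 1 ≤ i := le_trans ht hti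
    have hLi := hpos i h1i
    have hLt := hpos t ht
    have hLti : L t ≤ L i := hmono hti
    have hi0 : (0:ℝ) < (i:ℝ) := by exact_mod_cast h1i
    calc |a i| ≤ C / ((i:ℝ) * L i) := hCa i h1i
      _ = (C / L i) * (i:ℝ)⁻¹ := by rw [mul_comm (i:ℝ) (L i), ← div_div, div_eq_mul_inv]
      _ ≤ (C / L t) * (i:ℝ)⁻¹ := by
          apply mul_le_mul_of_nonneg_right _ (by positivity)
          exact div_le_div_of_nonneg_left hC0.le hLt hLti
  -- harmonic bounds
  have hH2 : ∀ j n : ℕ, 1 ≤ j →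
      ∑ i ∈ Finset.Icc (j+1) (j+n), ((i:ℝ))⁻¹ ≤ (n:ℝ)/(j:ℝ) := by
    intro j n hj
    have hj0 : (0:ℝ) < (j:ℝ) := by exact_mod_cast hj
    calc ∑ i ∈ Finset.Icc (j+1) (j+n), ((i:ℝ))⁻¹
        ≤ ∑ _i ∈ Finset.Icc (j+1) (j+n), ((j:ℝ))⁻¹ := by
          apply Finset.sum_le_sum
          intro i hi
          obtain ⟨hi1, _⟩ := Finset.mem_Icc.mp hi
          exact inv_anti₀ hj0 (by exact_mod_cast le_trans (Nat.le_succ j) hi1)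
      _ = (n:ℝ) * ((j:ℝ))⁻¹ := by
          rw [Finset.sum_const, Nat.card_Icc]
          simp only [nsmul_eq_mul]
          congr 1
          push_cast [show j + n + 1 - (j+1) = n by omega]
          ring
      _ = (n:ℝ)/(j:ℝ) := by ring
  have hH1 : ∀ j n : ℕ, 1 ≤ j → j ≤ n →
      ∑ i ∈ Finset.Icc (j+1) (j+n), ((i:ℝ))⁻¹
        ≤ 16 * ((n:ℝ)/(j:ℝ)) ^ ((8:ℝ)⁻¹) := by
    intro j n hj hjn
    have hj0 : (0:ℝ) < (j:ℝ) := by exact_mod_cast hj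
    have hn1 : 1 ≤ n := le_trans hj hjn
    have hn0 : (0:ℝ) < (n:ℝ) := by exact_mod_cast hn1
    have step1 : ∑ i ∈ Finset.Icc (j+1) (j+n), ((i:ℝ))⁻¹
        ≤ (j:ℝ) ^ (-(8:ℝ)⁻¹) * ∑ i ∈ Finset.Icc 1 (2*n), (i:ℝ) ^ ((8:ℝ)⁻¹ - 1) := by
      rw [Finset.mul_sum]
      calc ∑ i ∈ Finset.Icc (j+1) (j+n), ((i:ℝ))⁻¹
          ≤ ∑ i ∈ Finset.Icc (j+1) (j+n), (j:ℝ) ^ (-(8:ℝ)⁻¹) * (i:ℝ) ^ ((8:ℝ)⁻¹ - 1) := by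
            apply Finset.sum_le_sum
            intro i hi
            obtain ⟨hi1, _⟩ := Finset.mem_Icc.mp hi
            have hji : j ≤ i := le_trans (Nat.le_succ j) hi1
            have hi0 : (0:ℝ) < (i:ℝ) := by
              exact_mod_cast lt_of_lt_of_le hj (by exact_mod_cast hji)
            have e1 : ((i:ℝ))⁻¹ = (i:ℝ) ^ (-(8:ℝ)⁻¹) * (i:ℝ) ^ ((8:ℝ)⁻¹ - 1) := by
              rw [← Real.rpow_add hi0]
              norm_num
              exact (Real.rpow_neg_one (i:ℝ)).symm
            rw [e1]
            apply mul_le_mul_of_nonneg_right _ (Real.rpow_nonneg hi0.le _)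
            exact Real.rpow_le_rpow_of_nonpos hj0 (by exact_mod_cast hji) (by norm_num)
        _ ≤ ∑ i ∈ Finset.Icc 1 (2*n), (j:ℝ) ^ (-(8:ℝ)⁻¹) * (i:ℝ) ^ ((8:ℝ)⁻¹ - 1) := by
            apply Finset.sum_le_sum_of_subset_of_nonneg
            · apply Finset.Icc_subset_Icc <;> omega
            · intro i _ _
              positivity
    have step2 : ∑ i ∈ Finset.Icc 1 (2*n), (i:ℝ) ^ ((8:ℝ)⁻¹ - 1)
        ≤ 8 * ((2*n : ℕ):ℝ) ^ ((8:ℝ)⁻¹) := by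
      have := aux_sum_rpow (8:ℝ)⁻¹ (by norm_num) (by norm_num) (2*n)
      calc ∑ i ∈ Finset.Icc 1 (2*n), (i:ℝ) ^ ((8:ℝ)⁻¹ - 1)
          ≤ ((2*n : ℕ):ℝ) ^ ((8:ℝ)⁻¹) / (8:ℝ)⁻¹ := this
        _ = 8 * ((2*n : ℕ):ℝ) ^ ((8:ℝ)⁻¹) := by ring
    have step3 : ((2*n : ℕ):ℝ) ^ ((8:ℝ)⁻¹) ≤ 2 * (n:ℝ) ^ ((8:ℝ)⁻¹) := by
      have e : ((2*n : ℕ):ℝ) = 2 * (n:ℝ) := by push_cast; ring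
      rw [e, Real.mul_rpow (by norm_num) hn0.le]
      apply mul_le_mul_of_nonneg_right _ (Real.rpow_nonneg hn0.le _)
      calc (2:ℝ) ^ ((8:ℝ)⁻¹) ≤ (2:ℝ) ^ (1:ℝ) :=
            Real.rpow_le_rpow_of_exponent_le one_le_two (by norm_num)
        _ = 2 := Real.rpow_one 2
    have efin : (j:ℝ) ^ (-(8:ℝ)⁻¹) * (16 * (n:ℝ) ^ ((8:ℝ)⁻¹))
        = 16 * ((n:ℝ)/(j:ℝ)) ^ ((8:ℝ)⁻¹) := by
      rw [Real.div_rpow hn0.le hj0.le, Real.rpow_neg hj0.le]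
      ring
    have hjnn : 0 ≤ (j:ℝ) ^ (-(8:ℝ)⁻¹) := Real.rpow_nonneg hj0.le _
    calc ∑ i ∈ Finset.Icc (j+1) (j+n), ((i:ℝ))⁻¹
        ≤ (j:ℝ) ^ (-(8:ℝ)⁻¹) * ∑ i ∈ Finset.Icc 1 (2*n), (i:ℝ) ^ ((8:ℝ)⁻¹ - 1) := step1
      _ ≤ (j:ℝ) ^ (-(8:ℝ)⁻¹) * (16 * (n:ℝ) ^ ((8:ℝ)⁻¹)) := by
          apply mul_le_mul_of_nonneg_left _ hjnn
          calc ∑ i ∈ Finset.Icc 1 (2*n), (i:ℝ) ^ ((8:ℝ)⁻¹ - 1)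
              ≤ 8 * ((2*n : ℕ):ℝ) ^ ((8:ℝ)⁻¹) := step2
            _ ≤ 8 * (2 * (n:ℝ) ^ ((8:ℝ)⁻¹)) := by linarith
            _ = 16 * (n:ℝ) ^ ((8:ℝ)⁻¹) := by ring
      _ = 16 * ((n:ℝ)/(j:ℝ)) ^ ((8:ℝ)⁻¹) := efin
  have hH0 : ∀ n : ℕ, ∑ i ∈ Finset.Icc 1 n, ((i:ℝ))⁻¹ ≤ 8 * (n:ℝ) ^ ((8:ℝ)⁻¹) := by
    intro n
    have step : ∑ i ∈ Finset.Icc 1 n, ((i:ℝ))⁻¹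
        ≤ ∑ i ∈ Finset.Icc 1 n, (i:ℝ) ^ ((8:ℝ)⁻¹ - 1) := by
      apply Finset.sum_le_sum
      intro i hi
      obtain ⟨hi1, _⟩ := Finset.mem_Icc.mp hi
      have hi0 : (1:ℝ) ≤ (i:ℝ) := by exact_mod_cast hi1
      calc ((i:ℝ))⁻¹ = (i:ℝ) ^ (-1:ℝ) := (Real.rpow_neg_one (i:ℝ)).symm
        _ ≤ (i:ℝ) ^ ((8:ℝ)⁻¹ - 1) := Real.rpow_le_rpow_of_exponent_le hi0 (by norm_num)
    have := aux_sum_rpow (8:ℝ)⁻¹ (by norm_num) (by norm_num) n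
    calc ∑ i ∈ Finset.Icc 1 n, ((i:ℝ))⁻¹
        ≤ (n:ℝ) ^ ((8:ℝ)⁻¹) / (8:ℝ)⁻¹ := le_trans step this
      _ = 8 * (n:ℝ) ^ ((8:ℝ)⁻¹) := by ring
  -- squares
  have hsq : ∀ (x y : ℝ), |x| ≤ y → x^2 ≤ y^2 := by
    intro x y h
    have h0 : 0 ≤ |x| := abs_nonneg x
    nlinarith [sq_abs x]
  set A : ℝ := 1089 * C^2 * D^2 with hAdef
  have hA0 : (0:ℝ) < A := by
    have h1 : (0:ℝ) < C^2 := pow_pos hC0 2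
    have h2 : (0:ℝ) < D^2 := pow_pos hD0 2
    rw [hAdef]; positivity
  -- Part P0
  have hP0 : ∀ n : ℕ, 1 ≤ n → s 0 n ^ 2 ≤ 64 * (C^2 * D^2 * n / L n ^ 2) := by
    intro n hn
    have hLn := hpos n hn
    have hL1 := hpos 1 le_rfl
    have hn0 : (0:ℝ) < (n:ℝ) := by exact_mod_cast hn
    have hn1 : (1:ℝ) ≤ (n:ℝ) := by exact_mod_cast hn
    have h1 : |s 0 n| ≤ (C / L 1) * (8 * (n:ℝ) ^ ((8:ℝ)⁻¹)) := by
      have h2 := hsabs 0 n 1 le_rfl (by omega)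
      simp only [zero_add] at h2
      exact le_trans h2 (mul_le_mul_of_nonneg_left (hH0 n) (by positivity))
    have h3 : s 0 n ^ 2 ≤ ((C / L 1) * (8 * (n:ℝ) ^ ((8:ℝ)⁻¹)))^2 := hsq _ _ h1
    have h4 : ((C / L 1) * (8 * (n:ℝ) ^ ((8:ℝ)⁻¹)))^2
        = 64 * C^2 / L 1 ^ 2 * (n:ℝ) ^ ((4:ℝ)⁻¹) := by
      have e : ((n:ℝ) ^ ((8:ℝ)⁻¹))^2 = (n:ℝ) ^ ((4:ℝ)⁻¹) := by
        rw [← Real.rpow_natCast ((n:ℝ) ^ ((8:ℝ)⁻¹)) 2, ← Real.rpow_mul hn0.le]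
        norm_num
      calc (C / L 1 * (8 * (n:ℝ) ^ ((8:ℝ)⁻¹)))^2
          = 64 * C^2 / L 1 ^2 * ((n:ℝ) ^ ((8:ℝ)⁻¹))^2 := by ring
        _ = 64 * C^2 / L 1 ^ 2 * (n:ℝ) ^ ((4:ℝ)⁻¹) := by rw [e]
    -- L n ≤ D * n^{1/4} * L 1
    have h5 : L n ≤ D * (n:ℝ) ^ ((4:ℝ)⁻¹) * L 1 := by
      have := hD 1 n le_rfl hn
      simpa using this
    have h6 : L n ^ 2 ≤ D^2 * (n:ℝ) ^ ((2:ℝ)⁻¹) * L 1 ^ 2 := by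
      have hr : ((n:ℝ) ^ ((4:ℝ)⁻¹))^2 = (n:ℝ) ^ ((2:ℝ)⁻¹) := by
        rw [← Real.rpow_natCast ((n:ℝ) ^ ((4:ℝ)⁻¹)) 2, ← Real.rpow_mul hn0.le]
        norm_num
      have h7 : L n ^ 2 ≤ (D * (n:ℝ) ^ ((4:ℝ)⁻¹) * L 1)^2 := by
        apply hsq
        rwa [abs_of_pos hLn]
      calc L n ^2 ≤ (D * (n:ℝ) ^ ((4:ℝ)⁻¹) * L 1)^2 := h7
        _ = D^2 * ((n:ℝ) ^ ((4:ℝ)⁻¹))^2 * L 1 ^2 := by ring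
        _ = D^2 * (n:ℝ) ^ ((2:ℝ)⁻¹) * L 1 ^ 2 := by rw [hr]
    -- conclude: 64 C²/L1² n^{1/4} ≤ 64 C² D² n / Ln²
    have hgoal : 64 * C^2 / L 1 ^2 * (n:ℝ) ^ ((4:ℝ)⁻¹) ≤ 64 * (C^2 * D^2 * n / L n ^2) := by
      rw [div_mul_eq_mul_div, div_le_iff₀ (by positivity : (0:ℝ) < L 1 ^2)]
      rw [show 64 * (C^2*D^2*(n:ℝ)/L n^2) = 64*C^2*D^2*(n:ℝ)/L n^2 by ring,
        div_mul_eq_mul_div, le_div_iff₀ (by positivity : (0:ℝ) < L n ^2)]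
      have h8 : (n:ℝ) ^ ((4:ℝ)⁻¹) * L n ^2 ≤ (n:ℝ) ^ ((4:ℝ)⁻¹) * (D^2 * (n:ℝ) ^ ((2:ℝ)⁻¹) * L 1 ^2) :=
        mul_le_mul_of_nonneg_left h6 (Real.rpow_nonneg hn0.le _)
      have h9 : (n:ℝ) ^ ((4:ℝ)⁻¹) * (n:ℝ) ^ ((2:ℝ)⁻¹) = (n:ℝ) ^ ((4:ℝ)⁻¹ + (2:ℝ)⁻¹) :=
        (Real.rpow_add hn0 _ _).symm
      have h10 : (n:ℝ) ^ ((4:ℝ)⁻¹ + (2:ℝ)⁻¹) ≤ (n:ℝ) := by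
        calc (n:ℝ) ^ ((4:ℝ)⁻¹ + (2:ℝ)⁻¹) ≤ (n:ℝ) ^ (1:ℝ) :=
          Real.rpow_le_rpow_of_exponent_le hn1 (by norm_num)
          _ = (n:ℝ) := Real.rpow_one _
      calc 64 * C^2 * (n:ℝ) ^ ((4:ℝ)⁻¹) * L n^2
          = 64 * C^2 * ((n:ℝ) ^ ((4:ℝ)⁻¹) * L n ^2) := by ring
        _ ≤ 64 * C^2 * ((n:ℝ) ^ ((4:ℝ)⁻¹) * (D^2 * (n:ℝ) ^ ((2:ℝ)⁻¹) * L 1 ^2)) := by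
            apply mul_le_mul_of_nonneg_left h8 (by positivity)
        _ = 64 * C^2 * D^2 * ((n:ℝ) ^ ((4:ℝ)⁻¹) * (n:ℝ) ^ ((2:ℝ)⁻¹)) * L 1^2 := by ring
        _ = 64 * C^2 * D^2 * (n:ℝ) ^ ((4:ℝ)⁻¹ + (2:ℝ)⁻¹) * L 1^2 := by rw [h9]
        _ ≤ 64 * C^2 * D^2 * (n:ℝ) * L 1^2 := by
            apply mul_le_mul_of_nonneg_right _ (by positivity)
            apply mul_le_mul_of_nonneg_left h10 (by positivity)
        _ = 64 * C^2 * D^2 * (n:ℝ) * L 1 ^2 := by ring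
    calc s 0 n ^2 ≤ 64 * C^2 / L 1 ^2 * (n:ℝ) ^ ((4:ℝ)⁻¹) := h3.trans_eq h4
      _ ≤ 64 * (C^2*D^2*(n:ℝ)/L n^2) := hgoal
  -- Part P1: middle range
  have hP1 : ∀ n : ℕ, 1 ≤ n →
      ∑ j ∈ Finset.Icc 1 n, s j n ^ 2 ≤ 1024 * (C^2 * D^2 * n / L n ^ 2) := by
    intro n hn
    have hLn := hpos n hn
    have hn0 : (0:ℝ) < (n:ℝ) := by exact_mod_cast hn
    have hterm : ∀ j ∈ Finset.Icc 1 n, s j n ^2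
        ≤ (256 * C^2 * D^2 / L n ^2) * ((n:ℝ) ^ ((4:ℝ)⁻¹ + (2:ℝ)⁻¹) * (j:ℝ) ^ ((4:ℝ)⁻¹ - 1)) := by
      intro j hj
      obtain ⟨hj1, hjn⟩ := Finset.mem_Icc.mp hj
      have hLj := hpos j hj1
      have hj0 : (0:ℝ) < (j:ℝ) := by exact_mod_cast hj1
      have hr0 : (0:ℝ) < (n:ℝ)/(j:ℝ) := by positivity
      have h1 : |s j n| ≤ (C / L j) * (16 * ((n:ℝ)/(j:ℝ)) ^ ((8:ℝ)⁻¹)) :=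
        le_trans (hsabs j n j hj1 (Nat.le_succ j))
          (mul_le_mul_of_nonneg_left (hH1 j n hj1 hjn) (by positivity))
      have h2 : s j n ^2 ≤ ((C / L j) * (16 * ((n:ℝ)/(j:ℝ)) ^ ((8:ℝ)⁻¹)))^2 := hsq _ _ h1
      have e1 : (((n:ℝ)/(j:ℝ)) ^ ((8:ℝ)⁻¹))^2 = ((n:ℝ)/(j:ℝ)) ^ ((4:ℝ)⁻¹) := by
        rw [← Real.rpow_natCast (((n:ℝ)/(j:ℝ)) ^ ((8:ℝ)⁻¹)) 2, ← Real.rpow_mul hr0.le]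
        norm_num
      have h3 : s j n ^2 ≤ 256 * C^2 / L j ^2 * ((n:ℝ)/(j:ℝ)) ^ ((4:ℝ)⁻¹) := by
        calc s j n ^2 ≤ ((C / L j) * (16 * ((n:ℝ)/(j:ℝ)) ^ ((8:ℝ)⁻¹)))^2 := h2
          _ = 256 * C^2 / L j ^2 * (((n:ℝ)/(j:ℝ)) ^ ((8:ℝ)⁻¹))^2 := by ring
          _ = 256 * C^2 / L j ^2 * ((n:ℝ)/(j:ℝ)) ^ ((4:ℝ)⁻¹) := by rw [e1]
      -- Potter: 1/L j^2 ≤ D^2 (n/j)^{1/2} / L n^2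
      have h5 : L n ≤ D * ((n:ℝ)/(j:ℝ)) ^ ((4:ℝ)⁻¹) * L j := hD j n hj1 hjn
      have e2 : (((n:ℝ)/(j:ℝ)) ^ ((4:ℝ)⁻¹))^2 = ((n:ℝ)/(j:ℝ)) ^ ((2:ℝ)⁻¹) := by
        rw [← Real.rpow_natCast (((n:ℝ)/(j:ℝ)) ^ ((4:ℝ)⁻¹)) 2, ← Real.rpow_mul hr0.le]
        norm_num
      have h6 : L n ^2 ≤ D^2 * ((n:ℝ)/(j:ℝ)) ^ ((2:ℝ)⁻¹) * L j ^2 := by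
        have h7 : L n ^2 ≤ (D * ((n:ℝ)/(j:ℝ)) ^ ((4:ℝ)⁻¹) * L j)^2 := by
          apply hsq; rwa [abs_of_pos hLn]
        calc L n ^2 ≤ (D * ((n:ℝ)/(j:ℝ)) ^ ((4:ℝ)⁻¹) * L j)^2 := h7
          _ = D^2 * (((n:ℝ)/(j:ℝ)) ^ ((4:ℝ)⁻¹))^2 * L j^2 := by ring
          _ = D^2 * ((n:ℝ)/(j:ℝ)) ^ ((2:ℝ)⁻¹) * L j ^2 := by rw [e2]
      have h8 : (1:ℝ) / L j ^2 ≤ D^2 * ((n:ℝ)/(j:ℝ)) ^ ((2:ℝ)⁻¹) / L n ^2 := by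
        rw [div_le_div_iff₀ (by positivity) (by positivity)]
        linarith
      have e3 : ((n:ℝ)/(j:ℝ)) ^ ((4:ℝ)⁻¹) * ((n:ℝ)/(j:ℝ)) ^ ((2:ℝ)⁻¹)
          = ((n:ℝ)/(j:ℝ)) ^ ((4:ℝ)⁻¹ + (2:ℝ)⁻¹) := (Real.rpow_add hr0 _ _).symm
      have e4 : ((n:ℝ)/(j:ℝ)) ^ ((4:ℝ)⁻¹ + (2:ℝ)⁻¹)
          = (n:ℝ) ^ ((4:ℝ)⁻¹ + (2:ℝ)⁻¹) * (j:ℝ) ^ ((4:ℝ)⁻¹ - 1) := by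
        rw [Real.div_rpow hn0.le hj0.le]
        rw [div_eq_mul_inv, ← Real.rpow_neg hj0.le]
        congr 1
        norm_num
      calc s j n ^2 ≤ 256 * C^2 / L j ^2 * ((n:ℝ)/(j:ℝ)) ^ ((4:ℝ)⁻¹) := h3
        _ = 256 * C^2 * ((n:ℝ)/(j:ℝ)) ^ ((4:ℝ)⁻¹) * (1 / L j ^2) := by ring
        _ ≤ 256 * C^2 * ((n:ℝ)/(j:ℝ)) ^ ((4:ℝ)⁻¹) * (D^2 * ((n:ℝ)/(j:ℝ)) ^ ((2:ℝ)⁻¹) / L n ^2) := by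
            apply mul_le_mul_of_nonneg_left h8 (by positivity)
        _ = (256 * C^2 * D^2 / L n ^2) * (((n:ℝ)/(j:ℝ)) ^ ((4:ℝ)⁻¹) * ((n:ℝ)/(j:ℝ)) ^ ((2:ℝ)⁻¹)) := by ring
        _ = (256 * C^2 * D^2 / L n ^2) * ((n:ℝ) ^ ((4:ℝ)⁻¹ + (2:ℝ)⁻¹) * (j:ℝ) ^ ((4:ℝ)⁻¹ - 1)) := by
            rw [e3, e4]
    have hsum : ∑ j ∈ Finset.Icc 1 n, (j:ℝ) ^ ((4:ℝ)⁻¹ - 1) ≤ 4 * (n:ℝ) ^ ((4:ℝ)⁻¹) := by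
      have := aux_sum_rpow (4:ℝ)⁻¹ (by norm_num) (by norm_num) n
      calc ∑ j ∈ Finset.Icc 1 n, (j:ℝ) ^ ((4:ℝ)⁻¹ - 1) ≤ (n:ℝ) ^ ((4:ℝ)⁻¹) / (4:ℝ)⁻¹ := this
        _ = 4 * (n:ℝ) ^ ((4:ℝ)⁻¹) := by ring
    have e5 : (n:ℝ) ^ ((4:ℝ)⁻¹ + (2:ℝ)⁻¹) * (n:ℝ) ^ ((4:ℝ)⁻¹) = (n:ℝ) := by
      rw [← Real.rpow_add hn0]
      norm_num
    calc ∑ j ∈ Finset.Icc 1 n, s j n ^2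
        ≤ ∑ j ∈ Finset.Icc 1 n, (256 * C^2 * D^2 / L n ^2)
            * ((n:ℝ) ^ ((4:ℝ)⁻¹ + (2:ℝ)⁻¹) * (j:ℝ) ^ ((4:ℝ)⁻¹ - 1)) :=
          Finset.sum_le_sum hterm
      _ = (256 * C^2 * D^2 / L n ^2) * (n:ℝ) ^ ((4:ℝ)⁻¹ + (2:ℝ)⁻¹)
            * ∑ j ∈ Finset.Icc 1 n, (j:ℝ) ^ ((4:ℝ)⁻¹ - 1) := by
          rw [Finset.mul_sum]
          apply Finset.sum_congr rfl
          intro j _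
          ring
      _ ≤ (256 * C^2 * D^2 / L n ^2) * (n:ℝ) ^ ((4:ℝ)⁻¹ + (2:ℝ)⁻¹) * (4 * (n:ℝ) ^ ((4:ℝ)⁻¹)) := by
          apply mul_le_mul_of_nonneg_left hsum (by positivity)
      _ = 1024 * (C^2 * D^2 / L n ^2) * ((n:ℝ) ^ ((4:ℝ)⁻¹ + (2:ℝ)⁻¹) * (n:ℝ) ^ ((4:ℝ)⁻¹)) := by ring
      _ = 1024 * (C^2 * D^2 * n / L n ^2) := by rw [e5]; ring
  -- Part P2: tail
  have hP2 : ∀ n : ℕ, 1 ≤ n → ∀ M : ℕ,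
      ∑ j ∈ Finset.Icc (n+1) M, s j n ^ 2 ≤ C^2 * n / L n ^2 := by
    intro n hn M
    have hLn := hpos n hn
    have hn0 : (0:ℝ) < (n:ℝ) := by exact_mod_cast hn
    have hterm : ∀ j ∈ Finset.Icc (n+1) M, s j n ^2
        ≤ (C^2 * n^2 / L n ^2) * (((j:ℝ)^2)⁻¹) := by
      intro j hj
      obtain ⟨hj1, _⟩ := Finset.mem_Icc.mp hj
      have hj1' : 1 ≤ j := by omega
      have hnj : n ≤ j := by omega
      have hLj := hpos j hj1'
      have hj0 : (0:ℝ) < (j:ℝ) := by exact_mod_cast hj1'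
      have hLnj : L n ≤ L j := hmono hnj
      have h1 : |s j n| ≤ (C / L n) * ((n:ℝ)/(j:ℝ)) := by
        calc |s j n| ≤ (C / L j) * ∑ i ∈ Finset.Icc (j+1) (j+n), ((i:ℝ))⁻¹ :=
              hsabs j n j hj1' (Nat.le_succ j)
          _ ≤ (C / L n) * ((n:ℝ)/(j:ℝ)) := by
              apply mul_le_mul (div_le_div_of_nonneg_left hC0.le hLn hLnj) (hH2 j n hj1')
                (Finset.sum_nonneg fun i _ => by positivity) (by positivity)
      have h2 : s j n ^2 ≤ ((C / L n) * ((n:ℝ)/(j:ℝ)))^2 := hsq _ _ h1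
      calc s j n ^2 ≤ ((C / L n) * ((n:ℝ)/(j:ℝ)))^2 := h2
        _ = (C^2 * n^2 / L n ^2) * (((j:ℝ)^2)⁻¹) := by
            field_simp
    calc ∑ j ∈ Finset.Icc (n+1) M, s j n ^2
        ≤ ∑ j ∈ Finset.Icc (n+1) M, (C^2 * n^2 / L n ^2) * (((j:ℝ)^2)⁻¹) :=
          Finset.sum_le_sum hterm
      _ = (C^2 * n^2 / L n ^2) * ∑ j ∈ Finset.Icc (n+1) M, ((j:ℝ)^2)⁻¹ := by
          rw [Finset.mul_sum]
      _ ≤ (C^2 * n^2 / L n ^2) * ((n:ℝ))⁻¹ := by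
          apply mul_le_mul_of_nonneg_left (aux_sum_inv_sq n hn M) (by positivity)
      _ = C^2 * n / L n ^2 := by
          field_simp
  -- main finite bound
  have hmain : ∀ n : ℕ, 1 ≤ n → ∀ M : ℕ,
      ∑ j ∈ Finset.range M, s j n ^ 2 ≤ A * n / L n ^ 2 := by
    intro n hn M
    have hLn := hpos n hn
    have hn0 : (0:ℝ) < (n:ℝ) := by exact_mod_cast hn
    set K := max M (n+1) with hKdef
    have hK : n + 1 ≤ K := le_max_right _ _
    have hsub : ∑ j ∈ Finset.range M, s j n ^2 ≤ ∑ j ∈ Finset.range K, s j n ^2 :=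
      Finset.sum_le_sum_of_subset_of_nonneg
        (Finset.range_subset_range.mpr (le_max_left _ _)) (fun _ _ _ => sq_nonneg _)
    have hsplit : ∑ j ∈ Finset.range K, s j n ^2
        = s 0 n ^2 + ∑ j ∈ Finset.Icc 1 n, s j n ^2
          + ∑ j ∈ Finset.Icc (n+1) (K-1), s j n ^2 := by
      rw [Finset.range_eq_Ico]
      rw [← Finset.sum_Ico_consecutive (fun j => s j n ^2) (Nat.zero_le (n+1)) hK]
      rw [← Finset.sum_Ico_consecutive (fun j => s j n ^2) (Nat.zero_le 1)
        (show (1:ℕ) ≤ n+1 by omega)]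
      have e0 : Finset.Ico 0 1 = ({0} : Finset ℕ) := rfl
      have e1 : Finset.Ico 1 (n+1) = Finset.Icc 1 n := Finset.Ico_add_one_right_eq_Icc 1 n
      have e2 : Finset.Ico (n+1) K = Finset.Icc (n+1) (K-1) := by
        rw [← Finset.Ico_add_one_right_eq_Icc]
        congr 1
        omega
      rw [e0, e1, e2, Finset.sum_singleton]
    set B : ℝ := C^2 * D^2 * n / L n ^2 with hBdef
    have hB0 : 0 ≤ B := by positivity
    have h0 := hP0 n hn
    have h1 := hP1 n hn
    have h2 := hP2 n hn (K-1)
    have h2' : ∑ j ∈ Finset.Icc (n+1) (K-1), s j n ^2 ≤ B := by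
      have hD2 : (1:ℝ) ≤ D^2 := by nlinarith
      have h4 : C^2 * (n:ℝ) / L n ^2 ≤ B := by
        rw [hBdef]
        rw [div_le_div_iff₀ (by positivity) (by positivity)]
        have h5 : 0 ≤ (D^2 - 1) * (C^2 * (n:ℝ) * L n^2) :=
          mul_nonneg (sub_nonneg.mpr hD2) (by positivity)
        nlinarith [h5]
      linarith
    have hAB : A * n / L n ^2 = 1089 * B := by
      rw [hAdef, hBdef]; ring
    calc ∑ j ∈ Finset.range M, s j n ^2 ≤ ∑ j ∈ Finset.range K, s j n ^2 := hsub
      _ = s 0 n ^2 + ∑ j ∈ Finset.Icc 1 n, s j n ^2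
          + ∑ j ∈ Finset.Icc (n+1) (K-1), s j n ^2 := hsplit
      _ ≤ 64 * B + 1024 * B + B := by
          apply add_le_add (add_le_add h0 h1) h2'
      _ = 1089 * B := by ring
      _ = A * n / L n ^2 := hAB.symm
  -- conclude
  have hAn : ∀ n : ℕ, 1 ≤ n → ∑' j : ℕ, s j n ^2 ≤ A * n / L n ^2 := fun n hn =>
    Real.tsum_le_of_sum_range_le (fun j => sq_nonneg _) (hmain n hn)
  have htnn : ∀ n : ℕ, 0 ≤ ∑' j : ℕ, s j n ^2 := fun n =>
    tsum_nonneg (fun j => sq_nonneg _)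
  constructor
  · rw [Asymptotics.isBigO_iff]
    refine ⟨A, ?_⟩
    rw [eventually_atTop]
    refine ⟨1, fun n hn => ?_⟩
    have hLn := hpos n hn
    have hn0 : (0:ℝ) < (n:ℝ) := by exact_mod_cast hn
    rw [Real.norm_eq_abs, Real.norm_eq_abs, abs_of_nonneg (htnn n),
      abs_of_nonneg (by positivity : (0:ℝ) ≤ (n:ℝ)/L n ^2)]
    calc ∑' j : ℕ, s j n ^2 ≤ A * n / L n ^2 := hAn n hn
      _ = A * ((n:ℝ)/L n ^2) := by ring
  · rw [Asymptotics.isBigO_iff]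
    refine ⟨Real.sqrt A, ?_⟩
    rw [eventually_atTop]
    refine ⟨1, fun n hn => ?_⟩
    have hLn := hpos n hn
    have hn0 : (0:ℝ) ≤ (n:ℝ) := Nat.cast_nonneg n
    have hval : (0:ℝ) ≤ Real.sqrt n / L n := by positivity
    rw [Real.norm_eq_abs, Real.norm_eq_abs, abs_of_nonneg (Real.sqrt_nonneg _),
      abs_of_nonneg hval]
    have key : A * n / L n ^2 = (Real.sqrt A * (Real.sqrt n / L n))^2 := by
      rw [mul_pow, div_pow, Real.sq_sqrt hA0.le, Real.sq_sqrt hn0]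
      ring
    calc Real.sqrt (∑' j : ℕ, s j n ^2) ≤ Real.sqrt (A * n / L n ^2) :=
        Real.sqrt_le_sqrt (hAn n hn)
      _ = Real.sqrt A * (Real.sqrt n / L n) := by
          rw [key, Real.sqrt_sq (by positivity)]
end
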